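/- arXiv:1003.0852 — 6 statements merged into one kernel-verified Lean document; each statement's English description precedes it below -/
import Mathlib

section
/- Christoffel–Darboux type formula for non-symmetric matrix recurrences: Let N ≥ 1 and let {A_m}, {B_m}, {C_m} (m ≥ 0) be N×N complex matrices. Let {V_m}_{m ≥ -1} and {G_m}_{m ≥ -1} be sequences of N×N matrix polynomials with V_{-1} = 0, G_{-1} = 0 satisfying, for all m ≥ 0 and all z ∈ ℂ, z·V_m(z) = A_m V_{m+1}(z) + B_m V_m(z) + C_m V_{m-1}(z) and z·G_m(z) = G_{m-1}(z) A_{m-1} + G_m(z) B_m + G_{m+1}(z) C_{m+1}. Then for every m ≥ 0 and all x, z ∈ ℂ: (x − z) · Σ_{k=0}^{m} G_k(z) V_k(x) = G_m(z) A_m V_{m+1}(x) − G_{m+1}(z) C_{m+1} V_m(x). -/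
open Polynomial Matrix Finset

noncomputable section

/-- `N × N` matrices with polynomial entries, viewed as matrix polynomials. -/
abbrev MatPoly (N : ℕ) := Matrix (Fin N) (Fin N) (Polynomial ℂ)

/-- Evaluation of a matrix polynomial at a complex number (entrywise evaluation). -/
def evalM {N : ℕ} (Q : MatPoly N) (z : ℂ) : Matrix (Fin N) (Fin N) ℂ :=
  Q.map (Polynomial.eval z)

/-- **Christoffel–Darboux type formula** for non-symmetric matrix recurrences.
`V` satisfies the left recurrence (with `V_{-1} = 0`, folded into the `m = 0` case)
and `G` satisfies the right recurrence (with `G_{-1} = 0`).  Then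
`(x - z) Σ_{k=0}^m G_k(z) V_k(x) = G_m(z) A_m V_{m+1}(x) - G_{m+1}(z) C_{m+1} V_m(x)`. -/
theorem christoffel_darboux
    (N : ℕ) (hN : 1 ≤ N)
    (A B C : ℕ → Matrix (Fin N) (Fin N) ℂ)
    (V G : ℕ → MatPoly N)
    (hV0 : ∀ z : ℂ, z • evalM (V 0) z = A 0 * evalM (V 1) z + B 0 * evalM (V 0) z)
    (hV : ∀ (m : ℕ) (z : ℂ), z • evalM (V (m + 1)) z =
      A (m + 1) * evalM (V (m + 2)) z + B (m + 1) * evalM (V (m + 1)) z +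
        C (m + 1) * evalM (V m) z)
    (hG0 : ∀ z : ℂ, z • evalM (G 0) z = evalM (G 0) z * B 0 + evalM (G 1) z * C 1)
    (hG : ∀ (m : ℕ) (z : ℂ), z • evalM (G (m + 1)) z =
      evalM (G m) z * A m + evalM (G (m + 1)) z * B (m + 1) +
        evalM (G (m + 2)) z * C (m + 2)) :
    ∀ (m : ℕ) (x z : ℂ),
      (x - z) • ∑ k ∈ Finset.range (m + 1), evalM (G k) z * evalM (V k) x =
        evalM (G m) z * A m * evalM (V (m + 1)) x
          - evalM (G (m + 1)) z * C (m + 1) * evalM (V m) x := by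
  intro m
  induction m with
  | zero =>
    intro x z
    rw [Finset.sum_range_one, sub_smul, ← mul_smul_comm, hV0 x, ← smul_mul_assoc, hG0 z]
    noncomm_ring
  | succ m ih =>
    intro x z
    rw [Finset.sum_range_succ, smul_add, ih x z, sub_smul, ← mul_smul_comm, hV m x,
      ← smul_mul_assoc, hG m z]
    noncomm_ring

end
end

section
/- Confluent Christoffel–Darboux formula: Let N ≥ 1 and let {A_m}, {B_m}, {C_m} (m ≥ 0) be N×N complex matrices. Let {V_m}_{m ≥ -1} and {G_m}_{m ≥ -1} be sequences of N×N matrix polynomials with V_{-1} = 0, G_{-1} = 0 satisfying, for all m ≥ 0 and all z ∈ ℂ, z·V_m(z) = A_m V_{m+1}(z) + B_m V_m(z) + C_m V_{m-1}(z) and z·G_m(z) = G_{m-1}(z) A_{m-1} + G_m(z) B_m + G_{m+1}(z) C_{m+1}. Then for every m ≥ 0 and all x ∈ ℂ: Σ_{k=0}^{m} G_k(x) V_k(x) = G_m(x) A_m V'_{m+1}(x) − G_{m+1}(x) C_{m+1} V'_m(x), where ' denotes the derivative of a matrix polynomial (entrywise derivative). -/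
open Polynomial Matrix Finset

noncomputable section

/-- Entrywise derivative of a matrix polynomial. -/
def derivM {N : ℕ} (Q : MatPoly N) : MatPoly N :=
  Q.map fun p => Polynomial.derivative p

lemma evalM_add {N : ℕ} (P Q : MatPoly N) (z : ℂ) :
    evalM (P + Q) z = evalM P z + evalM Q z := by
  ext i j; simp [evalM]

lemma evalM_CmulL {N : ℕ} (A : Matrix (Fin N) (Fin N) ℂ) (P : MatPoly N) (z : ℂ) :
    evalM (A.map Polynomial.C * P) z = A * evalM P z := by
  ext i j; simp [evalM, Matrix.mul_apply, Polynomial.eval_finset_sum]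

lemma derivM_add {N : ℕ} (P Q : MatPoly N) :
    derivM (P + Q) = derivM P + derivM Q := by
  ext i j; simp [derivM]

lemma derivM_CmulL {N : ℕ} (A : Matrix (Fin N) (Fin N) ℂ) (P : MatPoly N) :
    derivM (A.map Polynomial.C * P) = A.map Polynomial.C * derivM P := by
  ext i j
  simp [derivM, Matrix.mul_apply, map_sum]

lemma deriv_of_eval {N : ℕ} (P Q : MatPoly N)
    (h : ∀ z : ℂ, z • evalM P z = evalM Q z) :
    ∀ z : ℂ, evalM P z + z • evalM (derivM P) z = evalM (derivM Q) z := by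
  have hpq : ∀ i j, X * P i j = Q i j := by
    intro i j
    apply Polynomial.funext
    intro z
    have := congrFun (congrFun (h z) i) j
    simpa [evalM, Matrix.smul_apply, Matrix.map_apply] using this
  intro z
  ext i j
  have := congrArg (fun p => (Polynomial.derivative p).eval z) (hpq i j)
  simpa [evalM, derivM, Matrix.add_apply, Matrix.smul_apply, Matrix.map_apply] using this

/-- **Confluent Christoffel–Darboux formula** for non-symmetric matrix recurrences:
`Σ_{k=0}^m G_k(x) V_k(x) = G_m(x) A_m V'_{m+1}(x) - G_{m+1}(x) C_{m+1} V'_m(x)`. -/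
theorem confluent_christoffel_darboux
    (N : ℕ) (hN : 1 ≤ N)
    (A B C : ℕ → Matrix (Fin N) (Fin N) ℂ)
    (V G : ℕ → MatPoly N)
    (hV0 : ∀ z : ℂ, z • evalM (V 0) z = A 0 * evalM (V 1) z + B 0 * evalM (V 0) z)
    (hV : ∀ (m : ℕ) (z : ℂ), z • evalM (V (m + 1)) z =
      A (m + 1) * evalM (V (m + 2)) z + B (m + 1) * evalM (V (m + 1)) z +
        C (m + 1) * evalM (V m) z)
    (hG0 : ∀ z : ℂ, z • evalM (G 0) z = evalM (G 0) z * B 0 + evalM (G 1) z * C 1)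
    (hG : ∀ (m : ℕ) (z : ℂ), z • evalM (G (m + 1)) z =
      evalM (G m) z * A m + evalM (G (m + 1)) z * B (m + 1) +
        evalM (G (m + 2)) z * C (m + 2)) :
    ∀ (m : ℕ) (x : ℂ),
      ∑ k ∈ Finset.range (m + 1), evalM (G k) x * evalM (V k) x =
        evalM (G m) x * A m * evalM (derivM (V (m + 1))) x
          - evalM (G (m + 1)) x * C (m + 1) * evalM (derivM (V m)) x := by
  -- derivative versions of the V-recurrences
  have dV0 : ∀ x : ℂ, evalM (V 0) x + x • evalM (derivM (V 0)) x =
      A 0 * evalM (derivM (V 1)) x + B 0 * evalM (derivM (V 0)) x := by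
    intro x
    have h := deriv_of_eval (V 0)
      ((A 0).map Polynomial.C * V 1 + (B 0).map Polynomial.C * V 0)
      (fun z => by simpa [evalM_add, evalM_CmulL] using hV0 z) x
    simpa [derivM_add, derivM_CmulL, evalM_add, evalM_CmulL] using h
  have dV : ∀ (m : ℕ) (x : ℂ), evalM (V (m + 1)) x + x • evalM (derivM (V (m + 1))) x =
      A (m + 1) * evalM (derivM (V (m + 2))) x + B (m + 1) * evalM (derivM (V (m + 1))) x +
        C (m + 1) * evalM (derivM (V m)) x := by
    intro m x
    have h := deriv_of_eval (V (m + 1))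
      ((A (m + 1)).map Polynomial.C * V (m + 2) + (B (m + 1)).map Polynomial.C * V (m + 1)
        + (C (m + 1)).map Polynomial.C * V m)
      (fun z => by simpa [evalM_add, evalM_CmulL] using hV m z) x
    simpa [derivM_add, derivM_CmulL, evalM_add, evalM_CmulL] using h
  intro m x
  induction m with
  | zero =>
    have h1 := dV0 x
    have h2 := hG0 x
    rw [Finset.sum_range_one]
    calc evalM (G 0) x * evalM (V 0) x
        = evalM (G 0) x * (evalM (V 0) x + x • evalM (derivM (V 0)) x)
            - evalM (G 0) x * (x • evalM (derivM (V 0)) x) := by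
          rw [mul_add, add_sub_cancel_right]
      _ = evalM (G 0) x * (A 0 * evalM (derivM (V 1)) x + B 0 * evalM (derivM (V 0)) x)
            - (x • evalM (G 0) x) * evalM (derivM (V 0)) x := by
          rw [h1, mul_smul_comm, ← smul_mul_assoc]
      _ = evalM (G 0) x * (A 0 * evalM (derivM (V 1)) x + B 0 * evalM (derivM (V 0)) x)
            - (evalM (G 0) x * B 0 + evalM (G 1) x * C 1) * evalM (derivM (V 0)) x := by
          rw [h2]
      _ = evalM (G 0) x * A 0 * evalM (derivM (V 1)) x
            - evalM (G 1) x * C 1 * evalM (derivM (V 0)) x := by noncomm_ring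
  | succ k ih =>
    have h1 := dV k x
    have h2 := hG k x
    rw [Finset.sum_range_succ, ih]
    have key : evalM (G (k + 1)) x * evalM (V (k + 1)) x =
        (evalM (G (k + 1)) x * A (k + 1) * evalM (derivM (V (k + 2))) x
          - evalM (G (k + 2)) x * C (k + 2) * evalM (derivM (V (k + 1))) x)
        - (evalM (G k) x * A k * evalM (derivM (V (k + 1))) x
          - evalM (G (k + 1)) x * C (k + 1) * evalM (derivM (V k)) x) := by
      calc evalM (G (k + 1)) x * evalM (V (k + 1)) x
          = evalM (G (k + 1)) x * (evalM (V (k + 1)) x + x • evalM (derivM (V (k + 1))) x)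
              - evalM (G (k + 1)) x * (x • evalM (derivM (V (k + 1))) x) := by
            rw [mul_add, add_sub_cancel_right]
        _ = evalM (G (k + 1)) x * (A (k + 1) * evalM (derivM (V (k + 2))) x
              + B (k + 1) * evalM (derivM (V (k + 1))) x
              + C (k + 1) * evalM (derivM (V k)) x)
              - (x • evalM (G (k + 1)) x) * evalM (derivM (V (k + 1))) x := by
            rw [h1, mul_smul_comm, ← smul_mul_assoc]
        _ = evalM (G (k + 1)) x * (A (k + 1) * evalM (derivM (V (k + 2))) x
              + B (k + 1) * evalM (derivM (V (k + 1))) x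
              + C (k + 1) * evalM (derivM (V k)) x)
              - (evalM (G k) x * A k + evalM (G (k + 1)) x * B (k + 1)
                + evalM (G (k + 2)) x * C (k + 2)) * evalM (derivM (V (k + 1))) x := by
            rw [h2]
        _ = _ := by noncomm_ring
    rw [key]
    abel

end
end

section
/- Reproducing property of the kernel: under the stated bi-orthogonality setup, if π is a vector polynomial of the form π(x) = Σ_{k=0}^{m} β_k^m B_k(x) with N×N matrix coefficients β_k^m, then for all x ∈ ℂ: π(x) = ( (K_{m+1}(x,z))^T U_z )(π) · P_0(x), where U_z acts in the variable z and K_{m+1}(x,z) is regarded as a matrix polynomial in z with coefficients that are polynomials in x. -/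
open Polynomial Matrix Finset

noncomputable section

/-- Composition of a matrix polynomial with a scalar polynomial `h` (entrywise). -/
def compH {N : ℕ} (Q : MatPoly N) (h : Polynomial ℂ) : MatPoly N :=
  Q.map fun p => p.comp h

/-- The vector polynomial `P₀(x) = [1, x, …, x^{N-1}]ᵀ`. -/
def P0 (N : ℕ) : Fin N → Polynomial ℂ := fun i => Polynomial.X ^ (i : ℕ)

/-- Action of a vector of linear functionals `U` on a vector polynomial `P`:
the matrix with `(i,j)` entry `u^j(p_i)`. -/
def applyU {N : ℕ} (U : Fin N → (Polynomial ℂ →ₗ[ℂ] ℂ)) (P : Fin N → Polynomial ℂ) :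
    Matrix (Fin N) (Fin N) ℂ := Matrix.of fun i j => U j (P i)

/-- The vector polynomial `B(x) = V(h(x)) P₀(x)` associated to a matrix polynomial `V`. -/
def Bvec {N : ℕ} (V : MatPoly N) (h : Polynomial ℂ) : Fin N → Polynomial ℂ :=
  (compH V h).mulVec (P0 N)

/-- `((Qᵀ U)(P))_{i,j} = Σ_s u^s (Q_{s,j} p_i)`. -/
def transApply {N : ℕ} (U : Fin N → (Polynomial ℂ →ₗ[ℂ] ℂ)) (Q : MatPoly N)
    (P : Fin N → Polynomial ℂ) : Matrix (Fin N) (Fin N) ℂ :=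
  Matrix.of fun i j => ∑ s, U s (Q s j * P i)

/-- Apply a linear functional to the (inner-variable) coefficients of a two-variable
polynomial, leaving a polynomial in the outer variable. -/
def applyCoeff (u : Polynomial ℂ →ₗ[ℂ] ℂ) (q : Polynomial (Polynomial ℂ)) : Polynomial ℂ :=
  q.sum fun n a => Polynomial.monomial n (u a)

/-- The kernel polynomial `K_m(x,z) = Σ_{k<m} G_k(h(z)) V_k(h(x))` as a matrix of
two-variable polynomials: the outer variable is `x`, the inner variable is `z`. -/
def Kker {N : ℕ} (V G : ℕ → MatPoly N) (h : Polynomial ℂ) (m : ℕ) :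
    Matrix (Fin N) (Fin N) (Polynomial (Polynomial ℂ)) :=
  Matrix.of fun i j => ∑ k ∈ Finset.range m, ∑ s,
    Polynomial.C ((compH (G k) h) i s) *
      (((compH (V k) h) s j).map (Polynomial.C : ℂ →+* Polynomial ℂ))

lemma applyCoeff_coeff (u : Polynomial ℂ →ₗ[ℂ] ℂ) (q : Polynomial (Polynomial ℂ)) (n : ℕ) :
    (applyCoeff u q).coeff n = u (q.coeff n) := by
  unfold applyCoeff
  rw [Polynomial.sum, Polynomial.finset_sum_coeff]
  rw [Finset.sum_eq_single n]
  · simp [Polynomial.coeff_monomial]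
  · intro b _ hb; simp [Polynomial.coeff_monomial, hb]
  · intro hn
    simp [Polynomial.notMem_support_iff.mp hn]

/-- **Reproducing property of the kernel.**  If `π(x) = Σ_{k=0}^m β_k B_k(x)` with matrix
coefficients `β_k`, then `π(x) = ((K_{m+1}(x,z))ᵀ U_z)(π) · P₀(x)` for all `x ∈ ℂ`. -/
theorem kernel_reproducing_property
    (N : ℕ) (hN : 1 ≤ N)
    (U : Fin N → (Polynomial ℂ →ₗ[ℂ] ℂ))
    (h : Polynomial ℂ) (hdeg : h.natDegree = N)
    (V G : ℕ → MatPoly N)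
    (hV0I : V 0 = 1)
    (hdV : ∀ m, ∀ i j, ((V m) i j).natDegree ≤ m)
    (hdG : ∀ m, ∀ i j, ((G m) i j).natDegree ≤ m)
    (hleft : ∀ m, ∀ k < m, applyU U (fun i => h ^ k * Bvec (V m) h i) = 0)
    (hleftn : ∀ m, IsUnit (applyU U fun i => h ^ m * Bvec (V m) h i))
    (hright : ∀ m, ∀ j < m,
      transApply U (compH (G m) h) (fun i => h ^ j * P0 N i) = 0)
    (hrightn : ∀ m, IsUnit (transApply U (compH (G m) h) fun i => h ^ m * P0 N i))
    (hbi : ∀ n m, transApply U (compH (G n) h) (Bvec (V m) h) =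
      if n = m then 1 else 0)
    (m : ℕ) (β : ℕ → Matrix (Fin N) (Fin N) ℂ) (π : Fin N → Polynomial ℂ)
    (hπ : π = fun i => ∑ k ∈ Finset.range (m + 1),
      (((β k).map fun a => Polynomial.C a).mulVec (Bvec (V k) h)) i) :
    ∀ (x : ℂ) (i : Fin N),
      (π i).eval x =
        ∑ j : Fin N,
          ((∑ s, applyCoeff (U s) (Kker V G h (m + 1) s j * Polynomial.C (π i))).eval x)
            * x ^ (j : ℕ) := by
  intro x i
  -- coefficients of the expansion:  Σ_s U s ((G k ∘ h)_{s t} · π i) = (β k)_{i t}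
  have hA : ∀ k ∈ Finset.range (m + 1), ∀ t : Fin N,
      (∑ s, U s ((compH (G k) h) s t * π i)) = (β k) i t := by
    intro k hk t
    have hπi : π i = ∑ l ∈ Finset.range (m + 1), ∑ r : Fin N,
        Polynomial.C ((β l) i r) * Bvec (V l) h r := by
      rw [hπ]
      simp [Matrix.mulVec, dotProduct, Matrix.map_apply]
    calc (∑ s, U s ((compH (G k) h) s t * π i))
        = ∑ l ∈ Finset.range (m + 1), ∑ r : Fin N,
            (β l) i r * (transApply U (compH (G k) h) (Bvec (V l) h)) r t := by
          simp only [hπi, Finset.mul_sum, map_sum, transApply, Matrix.of_apply]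
          rw [Finset.sum_comm]
          refine Finset.sum_congr rfl fun l _ => ?_
          rw [Finset.sum_comm]
          refine Finset.sum_congr rfl fun r _ => ?_
          refine Finset.sum_congr rfl fun s _ => ?_
          have : (compH (G k) h) s t * (Polynomial.C ((β l) i r) * Bvec (V l) h r)
              = (β l) i r • ((compH (G k) h) s t * Bvec (V l) h r) := by
            rw [Polynomial.smul_eq_C_mul]; ring
          rw [this, LinearMap.map_smul, smul_eq_mul]
      _ = ∑ l ∈ Finset.range (m + 1), ∑ r : Fin N,
            (β l) i r * (if k = l then (1 : Matrix (Fin N) (Fin N) ℂ) r t else 0) := by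
          refine Finset.sum_congr rfl fun l _ => Finset.sum_congr rfl fun r _ => ?_
          rw [hbi k l]
          split <;> simp_all
      _ = (β k) i t := by
          rw [Finset.sum_eq_single k]
          · simp [Matrix.one_apply]
          · intro l _ hl
            simp [Ne.symm hl]
          · intro hk'; exact absurd hk hk'
  -- the polynomial identity for the kernel sum
  have key : ∀ j : Fin N,
      (∑ s, applyCoeff (U s) (Kker V G h (m + 1) s j * Polynomial.C (π i))) =
      ∑ k ∈ Finset.range (m + 1), ∑ t : Fin N,
        Polynomial.C ((β k) i t) * (compH (V k) h) t j := by
    intro j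
    ext n
    rw [Polynomial.finset_sum_coeff, Polynomial.finset_sum_coeff]
    calc ∑ s, (applyCoeff (U s) (Kker V G h (m + 1) s j * Polynomial.C (π i))).coeff n
        = ∑ s, U s ((Kker V G h (m + 1) s j * Polynomial.C (π i)).coeff n) := by
          simp [applyCoeff_coeff]
      _ = ∑ k ∈ Finset.range (m + 1), ∑ t : Fin N,
            (∑ s, U s ((compH (G k) h) s t * π i)) * ((compH (V k) h) t j).coeff n := by
          simp only [Kker, Matrix.of_apply, Polynomial.coeff_mul_C,
            Polynomial.finset_sum_coeff, Finset.sum_mul, map_sum,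
            Polynomial.coeff_C_mul, Polynomial.coeff_map, Finset.sum_mul]
          rw [Finset.sum_comm]
          refine Finset.sum_congr rfl fun k _ => ?_
          rw [Finset.sum_comm]
          refine Finset.sum_congr rfl fun t _ => ?_
          refine Finset.sum_congr rfl fun s _ => ?_
          have : (compH (G k) h) s t * Polynomial.C (((compH (V k) h) t j).coeff n) * π i
              = (((compH (V k) h) t j).coeff n) • ((compH (G k) h) s t * π i) := by
            rw [Polynomial.smul_eq_C_mul]; ring
          rw [this, LinearMap.map_smul, smul_eq_mul, mul_comm]
      _ = ∑ k ∈ Finset.range (m + 1),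
            (∑ t : Fin N, Polynomial.C ((β k) i t) * (compH (V k) h) t j).coeff n := by
          refine Finset.sum_congr rfl fun k hk => ?_
          rw [Polynomial.finset_sum_coeff]
          refine Finset.sum_congr rfl fun t _ => ?_
          rw [hA k hk t, Polynomial.coeff_C_mul]
  -- finish by evaluating at x
  simp only [key]
  have hπi : π i = ∑ k ∈ Finset.range (m + 1), ∑ t : Fin N,
      Polynomial.C ((β k) i t) * Bvec (V k) h t := by
    rw [hπ]
    simp [Matrix.mulVec, dotProduct, Matrix.map_apply]
  rw [hπi]
  simp only [Polynomial.eval_finset_sum, Polynomial.eval_mul, Polynomial.eval_C,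
    Bvec, Matrix.mulVec, dotProduct, P0, Polynomial.eval_pow, Polynomial.eval_X]
  simp only [Finset.mul_sum, Finset.sum_mul, mul_assoc]
  conv_rhs => rw [Finset.sum_comm]
  refine Finset.sum_congr rfl fun k _ => ?_
  rw [Finset.sum_comm]

end
end

section
/- Uniform localization of zeros in the generalized matrix Nevai class: let {A_m}, {B_m}, {C_m} be sequences of N×N complex matrices with every A_m invertible, converging to matrices A, B, C respectively (with A and C nonsingular), and let {V_m}_{m ≥ -1} be the N×N matrix polynomials determined by V_{-1} = 0, V_0 = I and z V_m(z) = A_m V_{m+1}(z) + B_m V_m(z) + C_m V_{m-1}(z) for all m ≥ 0. Then there exists a positive constant M, independent of m, such that for every m ≥ 1 every root z₀ ∈ ℂ of the scalar polynomial det(V_m) satisfies |z₀| < M. -/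
/-! If `|z| ≥ 3K`, where `K` bounds all the recurrence coefficients, the recurrence
`z u_n = A_n u_{n+1} + B_n u_n + C_n u_{n-1}` forces `‖u_n‖` to be nondecreasing: the left side
has norm at least `3K‖u_n‖`, while the right side has norm at most `K‖u_{n+1}‖ + 2K‖u_n‖`.
Applied to `u_n = V_n(z) v`, this gives `‖v‖ ≤ ‖V_m(z) v‖`, so `V_m(z)` is nonsingular and
`det V_m` has no zero outside the disk of radius `3K`. A uniform `K` exists because convergent
sequences are bounded. -/

open Polynomial Matrix Finset

noncomputable section

open Filter

section ThreeTermRecurrence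

variable {𝕜 E : Type*} [NormedField 𝕜] [SeminormedAddCommGroup E] [NormedSpace 𝕜 E]

lemma norm_le_of_smul_eq_add_add {K : ℝ} (hK : 0 < K) {z : 𝕜} (hz : 3 * K ≤ ‖z‖)
    {x a p q r : E} (h : z • a = p + q + r) (hp : ‖p‖ ≤ K * ‖x‖) (hq : ‖q‖ ≤ K * ‖a‖)
    (hr : ‖r‖ ≤ K * ‖a‖) : ‖a‖ ≤ ‖x‖ := by
  have hsum : ‖z‖ * ‖a‖ ≤ K * ‖x‖ + K * ‖a‖ + K * ‖a‖ :=
    calc ‖z‖ * ‖a‖ = ‖p + q + r‖ := by rw [← h, norm_smul]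
      _ ≤ ‖p‖ + ‖q‖ + ‖r‖ := norm_add₃_le
      _ ≤ K * ‖x‖ + K * ‖a‖ + K * ‖a‖ := by gcongr
  have : 3 * K * ‖a‖ ≤ ‖z‖ * ‖a‖ := by gcongr
  exact le_of_mul_le_mul_left (by linarith) hK

lemma monotone_norm_of_threeTermRecurrence {K : ℝ} (hK : 0 < K) {z : 𝕜} (hz : 3 * K ≤ ‖z‖)
    {A B C : ℕ → E → E} (hA : ∀ n v, ‖A n v‖ ≤ K * ‖v‖) (hB : ∀ n v, ‖B n v‖ ≤ K * ‖v‖)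
    (hC : ∀ n v, ‖C n v‖ ≤ K * ‖v‖) {u : ℕ → E} (h0 : z • u 0 = A 0 (u 1) + B 0 (u 0))
    (hrec : ∀ n, z • u (n + 1) = A (n + 1) (u (n + 2)) + B (n + 1) (u (n + 1)) + C (n + 1) (u n)) :
    Monotone fun n ↦ ‖u n‖ := by
  refine monotone_nat_of_le_succ fun n ↦ ?_
  induction n with
  | zero =>
    refine norm_le_of_smul_eq_add_add hK hz (r := 0) (by rw [h0, add_zero]) (hA 0 _) (hB 0 _) ?_
    rw [norm_zero]; positivity
  | succ n ih =>
    exact norm_le_of_smul_eq_add_add hK hz (hrec n) (hA _ _) (hB _ _)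
      ((hC _ _).trans (by gcongr))

end ThreeTermRecurrence

lemma Filter.Tendsto.eventually_forall_norm_mulVec_le {l m α : Type*} [Fintype l] [Fintype m]
    [NonUnitalSeminormedRing α] {A : ℕ → Matrix l m α} {L : Matrix l m α}
    (h : Tendsto A atTop (nhds L)) :
    ∀ᶠ K in atTop, ∀ n v, ‖A n *ᵥ v‖ ≤ K * ‖v‖ := by
  let _ := Matrix.linftyOpSeminormedAddCommGroup (m := l) (n := m) (α := α)
  obtain ⟨K₀, hK₀⟩ := h.norm.bddAbove_range
  filter_upwards [eventually_ge_atTop K₀] with K hK n v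
  calc ‖A n *ᵥ v‖ ≤ ‖A n‖ * ‖v‖ := linfty_opNorm_mulVec _ _
    _ ≤ K * ‖v‖ := by gcongr; exact (hK₀ ⟨n, rfl⟩).trans hK

lemma eval_det_eq_det_evalM {N : ℕ} (Q : MatPoly N) (z : ℂ) : Q.det.eval z = (evalM Q z).det :=
  (Polynomial.evalRingHom z).map_det Q

lemma evalM_one {N : ℕ} (z : ℂ) : evalM (1 : MatPoly N) z = 1 :=
  Matrix.map_one _ eval_zero eval_one

lemma eval_det_ne_zero_of_recurrence {N : ℕ} {K : ℝ} (hK : 0 < K)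
    {A B C : ℕ → Matrix (Fin N) (Fin N) ℂ} (hA : ∀ n v, ‖A n *ᵥ v‖ ≤ K * ‖v‖)
    (hB : ∀ n v, ‖B n *ᵥ v‖ ≤ K * ‖v‖) (hC : ∀ n v, ‖C n *ᵥ v‖ ≤ K * ‖v‖)
    {V : ℕ → MatPoly N} (hV0I : V 0 = 1)
    (hrec0 : ∀ z : ℂ, z • evalM (V 0) z = A 0 * evalM (V 1) z + B 0 * evalM (V 0) z)
    (hrec : ∀ (m : ℕ) (z : ℂ), z • evalM (V (m + 1)) z =
      A (m + 1) * evalM (V (m + 2)) z + B (m + 1) * evalM (V (m + 1)) z +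
        C (m + 1) * evalM (V m) z)
    {z : ℂ} (hz : 3 * K ≤ ‖z‖) (m : ℕ) : (V m).det.eval z ≠ 0 := by
  classical
  rw [eval_det_eq_det_evalM]
  intro hdet
  obtain ⟨v, hv, hVv⟩ := exists_mulVec_eq_zero_iff.mpr hdet
  have hmono := monotone_norm_of_threeTermRecurrence hK hz hA hB hC
    (u := fun n ↦ evalM (V n) z *ᵥ v)
    (by simpa only [smul_mulVec, add_mulVec, ← mulVec_mulVec] using congrArg (· *ᵥ v) (hrec0 z))
    (fun n ↦ by
      simpa only [smul_mulVec, add_mulVec, ← mulVec_mulVec] using congrArg (· *ᵥ v) (hrec n z))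
  have := hmono (Nat.zero_le m)
  simp only [hV0I, evalM_one, one_mulVec, hVv, norm_zero] at this
  exact hv (norm_le_zero_iff.mp this)

theorem nevai_class_zeros_uniformly_bounded_general
    (N : ℕ)
    (A B C : ℕ → Matrix (Fin N) (Fin N) ℂ)
    (Ainf Binf Cinf : Matrix (Fin N) (Fin N) ℂ)
    (hAlim : Filter.Tendsto A Filter.atTop (nhds Ainf))
    (hBlim : Filter.Tendsto B Filter.atTop (nhds Binf))
    (hClim : Filter.Tendsto C Filter.atTop (nhds Cinf))
    (V : ℕ → MatPoly N)
    (hV0I : V 0 = 1)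
    (hrec0 : ∀ z : ℂ, z • evalM (V 0) z = A 0 * evalM (V 1) z + B 0 * evalM (V 0) z)
    (hrec : ∀ (m : ℕ) (z : ℂ), z • evalM (V (m + 1)) z =
      A (m + 1) * evalM (V (m + 2)) z + B (m + 1) * evalM (V (m + 1)) z +
        C (m + 1) * evalM (V m) z) :
    ∃ M : ℝ, 0 < M ∧ ∀ m : ℕ, 1 ≤ m → ∀ z : ℂ,
      (Matrix.det (V m)).eval z = 0 → ‖z‖ < M := by
  obtain ⟨K, hK, hAK, hBK, hCK⟩ := ((eventually_gt_atTop 0).and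
    (hAlim.eventually_forall_norm_mulVec_le.and
      (hBlim.eventually_forall_norm_mulVec_le.and
        hClim.eventually_forall_norm_mulVec_le))).exists
  refine ⟨3 * K, by positivity, fun m _ z hdet ↦ ?_⟩
  by_contra! hz
  exact eval_det_ne_zero_of_recurrence hK hAK hBK hCK hV0I hrec0 hrec hz m hdet

/-- **Uniform localization of zeros in the generalized matrix Nevai class.**  If the
recurrence coefficients converge (to `A∞`, `B∞`, `C∞` with `A∞`, `C∞` nonsingular),
then there is a constant `M > 0`, independent of `m`, such that every root of the
scalar polynomial `det V_m` lies in the disk `{|z| < M}`. -/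
theorem nevai_class_zeros_uniformly_bounded
    (N : ℕ) (hN : 1 ≤ N)
    (A B C : ℕ → Matrix (Fin N) (Fin N) ℂ)
    (hA : ∀ m, IsUnit (A m))
    (Ainf Binf Cinf : Matrix (Fin N) (Fin N) ℂ)
    (hAinf : IsUnit Ainf) (hCinf : IsUnit Cinf)
    (hAlim : Filter.Tendsto A Filter.atTop (nhds Ainf))
    (hBlim : Filter.Tendsto B Filter.atTop (nhds Binf))
    (hClim : Filter.Tendsto C Filter.atTop (nhds Cinf))
    (V : ℕ → MatPoly N)
    (hV0I : V 0 = 1)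
    (hrec0 : ∀ z : ℂ, z • evalM (V 0) z = A 0 * evalM (V 1) z + B 0 * evalM (V 0) z)
    (hrec : ∀ (m : ℕ) (z : ℂ), z • evalM (V (m + 1)) z =
      A (m + 1) * evalM (V (m + 2)) z + B (m + 1) * evalM (V (m + 1)) z +
        C (m + 1) * evalM (V m) z) :
    ∃ M : ℝ, 0 < M ∧ ∀ m : ℕ, 1 ≤ m → ∀ z : ℂ,
      (Matrix.det (V m)).eval z = 0 → ‖z‖ < M :=
  nevai_class_zeros_uniformly_bounded_general N A B C Ainf Binf Cinf hAlim hBlim hClim V hV0I hrec0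
    hrec

end
end

section
/- Quasi-definiteness criterion for the Dirac-modified functional: under the stated setup, there exists a sequence {B̃_m}_{m ≥ 0} of vector polynomials with B̃_m(x) = Ṽ_m(h(x))P_0(x), where Ṽ_m is an N×N matrix polynomial of degree m with nonsingular leading coefficient, satisfying (h^k Ũ)(B̃_m) = 0 for 0 ≤ k < m and (h^m Ũ)(B̃_m) nonsingular (i.e. Ũ is quasi-definite), if and only if for every m ≥ 0 the N×N matrix I + δ(P_0)·Λ^T·K_{m+1}(c_l, c_l) is nonsingular, where c_l is any zero of h; here K_{m+1}(c_l, c_l) = Σ_{j=0}^{m} G_j(0)V_j(0), which is independent of the choice of the zero c_l since h(c_l) = 0. -/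
open Polynomial Matrix Finset

noncomputable section

/-- The linear functional `p ↦ p⁽ⁱ⁾(c)` (the `i`-th derivative evaluated at `c`). -/
def dd (c : ℂ) (i : ℕ) : Polynomial ℂ →ₗ[ℂ] ℂ :=
  (Polynomial.leval c).comp
    ((Polynomial.derivative : Polynomial ℂ →ₗ[ℂ] Polynomial ℂ) ^ i)

/-- The components of the Dirac delta vector functional associated with the points `c j`
and multiplicities `Mu j + 1`, via an identification `e` of `Fin N` with the pairs
`(j, i)`, `0 ≤ i ≤ Mu j`. -/
def deltaVec {N M : ℕ} (c : Fin M → ℂ) (Mu : Fin M → ℕ)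
    (e : Fin N ≃ (Σ j : Fin M, Fin (Mu j + 1))) : Fin N → (Polynomial ℂ →ₗ[ℂ] ℂ) :=
  fun s => dd (c (e s).1) ((e s).2 : ℕ)

/-- `δ(P)`: the matrix with `(r,s)` entry the `s`-th component of `δ` applied to `p_r`. -/
def deltaMat {N M : ℕ} (c : Fin M → ℂ) (Mu : Fin M → ℕ)
    (e : Fin N ≃ (Σ j : Fin M, Fin (Mu j + 1))) (P : Fin N → Polynomial ℂ) :
    Matrix (Fin N) (Fin N) ℂ :=
  Matrix.of fun r s => deltaVec c Mu e s (P r)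

/-- The modified functional `Ũ = U + Λδ` acting on a vector polynomial:
`Ũ(P) = U(P) + δ(P) Λᵀ`. -/
def applyUt {N M : ℕ} (U : Fin N → (Polynomial ℂ →ₗ[ℂ] ℂ))
    (Λ : Matrix (Fin N) (Fin N) ℂ) (c : Fin M → ℂ) (Mu : Fin M → ℕ)
    (e : Fin N ≃ (Σ j : Fin M, Fin (Mu j + 1))) (P : Fin N → Polynomial ℂ) :
    Matrix (Fin N) (Fin N) ℂ :=
  applyU U P + deltaMat c Mu e P * Λ.transpose

/-- The coefficient of degree `m` of a matrix polynomial (its "leading coefficient"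
when it has degree `m`). -/
def leadC {N : ℕ} (Q : MatPoly N) (m : ℕ) : Matrix (Fin N) (Fin N) ℂ :=
  Matrix.of fun i j => (Q i j).coeff m

/-- `K_{m+1}(c_l, c_l) = Σ_{j=0}^m G_j(0) V_j(0)` (independent of the zero `c_l` of `h`,
since `h(c_l) = 0`). -/
def Kzero {N : ℕ} (V G : ℕ → MatPoly N) (m : ℕ) : Matrix (Fin N) (Fin N) ℂ :=
  ∑ j ∈ Finset.range (m + 1), evalM (G j) 0 * evalM (V j) 0

/-! ### helper lemmas -/

section Helpers

lemma isUnit_one_add_swap {R : Type*} [Ring R] {a b : R} (h : IsUnit (1 + a * b)) :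
    IsUnit (1 + b * a) := by
  obtain ⟨u, hu⟩ := h
  have h1 : (1 + a * b) * ↑u⁻¹ = 1 := by rw [← hu]; exact u.mul_inv
  have h2 : (↑u⁻¹ : R) * (1 + a * b) = 1 := by rw [← hu]; exact u.inv_mul
  refine isUnit_iff_exists.mpr ⟨1 - b * ↑u⁻¹ * a, ?_, ?_⟩
  · have e1 : (1 + b * a) * (1 - b * ↑u⁻¹ * a)
        = 1 + b * a - b * ((1 + a * b) * ↑u⁻¹) * a := by noncomm_ring
    rw [h1] at e1
    rw [e1]; noncomm_ring
  · have e1 : (1 - b * ↑u⁻¹ * a) * (1 + b * a)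
        = 1 + b * a - b * (↑u⁻¹ * (1 + a * b)) * a := by noncomm_ring
    rw [h2] at e1
    rw [e1]; noncomm_ring

lemma isUnit_one_add_swap_iff {R : Type*} [Ring R] (a b : R) :
    IsUnit (1 + a * b) ↔ IsUnit (1 + b * a) :=
  ⟨isUnit_one_add_swap, isUnit_one_add_swap⟩

lemma dd_apply (c : ℂ) (i : ℕ) (p : Polynomial ℂ) :
    dd c i p = (Polynomial.derivative^[i] p).eval c := by
  simp [dd, Module.End.pow_apply, Polynomial.leval_apply]

lemma dd_zero_of_dvd {c : ℂ} {i : ℕ} {p : Polynomial ℂ}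
    (hp : (X - C c) ^ (i + 1) ∣ p) : dd c i p = 0 := by
  rw [dd_apply]
  have h2 : (X - C c) ^ (i + 1 - i) ∣ Polynomial.derivative^[i] p :=
    Polynomial.pow_sub_dvd_iterate_derivative_of_pow_dvd i hp
  simp only [Nat.add_sub_cancel_left, pow_one] at h2
  obtain ⟨q, hq⟩ := h2
  simp [hq]

lemma dd_C_mul (c : ℂ) (i : ℕ) (a : ℂ) (p : Polynomial ℂ) :
    dd c i (C a * p) = a * dd c i p := by
  rw [← smul_eq_C_mul, LinearMap.map_smul, smul_eq_mul]


section Delta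

variable {N M : ℕ} (c : Fin M → ℂ) (Mu : Fin M → ℕ)
  (e : Fin N ≃ (Σ j : Fin M, Fin (Mu j + 1))) (h : Polynomial ℂ)
  (hh : h = ∏ j, (Polynomial.X - Polynomial.C (c j)) ^ (Mu j + 1))

include hh in
lemma deltaVec_zero_of_dvd (s : Fin N) {p : Polynomial ℂ} (hp : h ∣ p) :
    deltaVec c Mu e s p = 0 := by
  apply dd_zero_of_dvd
  refine dvd_trans (dvd_trans ?_ (hh ▸ Finset.dvd_prod_of_mem
    (fun j => (X - C (c j)) ^ (Mu j + 1)) (Finset.mem_univ (e s).1))) hp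
  exact pow_dvd_pow _ (Nat.succ_le_succ (Nat.lt_succ_iff.mp (e s).2.isLt))

end Delta

section Lin

variable {N : ℕ} (U : Fin N → (Polynomial ℂ →ₗ[ℂ] ℂ))

lemma Bvec_apply (Q : MatPoly N) (h : Polynomial ℂ) (i : Fin N) :
    Bvec Q h i = ∑ t, (Q i t).comp h * X ^ (t : ℕ) := by
  simp [Bvec, compH, Matrix.mulVec, dotProduct, P0]

lemma Bvec_comb {ι : Type*} (F : Finset ι) (A : ι → Matrix (Fin N) (Fin N) ℂ)
    (V : ι → MatPoly N) (h : Polynomial ℂ) (i : Fin N) :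
    Bvec (∑ n ∈ F, (A n).map C * V n) h i
      = ∑ n ∈ F, ∑ u, C (A n i u) * Bvec (V n) h u := by
  simp only [Bvec_apply, Matrix.sum_apply, Matrix.mul_apply, Matrix.map_apply,
    Polynomial.sum_comp, Polynomial.mul_comp, Polynomial.C_comp, Finset.sum_mul,
    Finset.mul_sum]
  rw [Finset.sum_comm]
  refine Finset.sum_congr rfl fun n _ => Finset.sum_comm.trans ?_
  exact Finset.sum_congr rfl fun u _ => Finset.sum_congr rfl fun t _ => by ring

lemma applyU_comb {ι : Type*} (F : Finset ι) (A : ι → Matrix (Fin N) (Fin N) ℂ)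
    (R : ι → Fin N → Polynomial ℂ) (q : Polynomial ℂ) :
    applyU U (fun i => q * ∑ n ∈ F, ∑ u, C (A n i u) * R n u)
      = ∑ n ∈ F, A n * applyU U (fun i => q * R n i) := by
  ext i j
  simp only [applyU, Matrix.of_apply, Finset.mul_sum, map_sum, Matrix.sum_apply,
    Matrix.mul_apply]
  refine Finset.sum_congr rfl fun n _ => Finset.sum_congr rfl fun u _ => ?_
  rw [mul_left_comm q, ← smul_eq_C_mul, LinearMap.map_smul, smul_eq_mul]

lemma transApply_comb {ι : Type*} (F : Finset ι) (A : ι → Matrix (Fin N) (Fin N) ℂ)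
    (R : ι → Fin N → Polynomial ℂ) (Gq : MatPoly N) :
    transApply U Gq (fun i => ∑ n ∈ F, ∑ u, C (A n i u) * R n u)
      = ∑ n ∈ F, A n * transApply U Gq (R n) := by
  ext i j
  simp only [transApply, Matrix.of_apply, Matrix.sum_apply, Matrix.mul_apply]
  have key : ∀ s, U s (Gq s j * ∑ n ∈ F, ∑ u, C (A n i u) * R n u)
      = ∑ n ∈ F, ∑ u, A n i u * U s (Gq s j * R n u) := by
    intro s
    rw [Finset.mul_sum, map_sum]
    refine Finset.sum_congr rfl fun n _ => ?_
    rw [Finset.mul_sum, map_sum]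
    refine Finset.sum_congr rfl fun u _ => ?_
    rw [mul_left_comm (Gq s j), ← smul_eq_C_mul, LinearMap.map_smul, smul_eq_mul]
  simp only [key]
  rw [Finset.sum_comm]
  refine Finset.sum_congr rfl fun n _ => ?_
  rw [Finset.sum_comm]
  refine Finset.sum_congr rfl fun u _ => ?_
  rw [Finset.mul_sum]

lemma evalM_comb {ι : Type*} (F : Finset ι) (A : ι → Matrix (Fin N) (Fin N) ℂ)
    (V : ι → MatPoly N) (z : ℂ) :
    evalM (∑ n ∈ F, (A n).map C * V n) z = ∑ n ∈ F, A n * evalM (V n) z := by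
  ext i j
  simp [evalM, Matrix.sum_apply, Matrix.mul_apply, eval_finset_sum]

lemma evalM_zero_eq_leadC (Q : MatPoly N) : evalM Q 0 = leadC Q 0 := by
  ext i j
  simp [evalM, leadC, Polynomial.coeff_zero_eq_eval_zero]

lemma leadC_comb (A : ℕ → Matrix (Fin N) (Fin N) ℂ) (V : ℕ → MatPoly N)
    (hdV : ∀ n, ∀ i j, ((V n) i j).natDegree ≤ n) (m : ℕ) :
    leadC (∑ n ∈ Finset.range (m+1), (A n).map C * V n) m = A m * leadC (V m) m := by
  ext i j
  simp only [leadC, Matrix.of_apply, Matrix.sum_apply, Polynomial.finset_sum_coeff,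
    Matrix.mul_apply, Matrix.map_apply, Polynomial.coeff_C_mul]
  rw [Finset.sum_range_succ]
  have : ∀ n ∈ Finset.range m,
      ∑ u, A n i u * ((V n) u j).coeff m = 0 := by
    intro n hn
    refine Finset.sum_eq_zero fun u _ => ?_
    rw [Polynomial.coeff_eq_zero_of_natDegree_lt
      (lt_of_le_of_lt (hdV n u j) (Finset.mem_range.mp hn)), mul_zero]
  rw [Finset.sum_eq_zero this, zero_add]

lemma natDegree_comb (A : ℕ → Matrix (Fin N) (Fin N) ℂ) (V : ℕ → MatPoly N)
    (hdV : ∀ n, ∀ i j, ((V n) i j).natDegree ≤ n) (m : ℕ) (i j : Fin N) :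
    ((∑ n ∈ Finset.range (m+1), (A n).map C * V n) i j).natDegree ≤ m := by
  simp only [Matrix.sum_apply, Matrix.mul_apply, Matrix.map_apply]
  refine Polynomial.natDegree_sum_le_of_forall_le _ _ fun n hn =>
    Polynomial.natDegree_sum_le_of_forall_le _ _ fun u _ => ?_
  exact le_trans (le_trans (Polynomial.natDegree_C_mul_le _ _) (hdV n u j))
    (Nat.lt_succ_iff.mp (Finset.mem_range.mp hn))

end Lin
end Helpers


section Chunk2

variable {N : ℕ}

lemma comp_eq_sum_coeff (p h : Polynomial ℂ) (d : ℕ) (hd : p.natDegree ≤ d) :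
    p.comp h = ∑ k ∈ Finset.range (d+1), C (p.coeff k) * h ^ k := by
  conv_lhs => rw [Polynomial.as_sum_range' p (d+1) (Nat.lt_succ_of_le hd)]
  rw [Polynomial.sum_comp]
  exact Finset.sum_congr rfl fun k _ => by
    rw [← Polynomial.C_mul_X_pow_eq_monomial, Polynomial.mul_comp,
      Polynomial.C_comp, Polynomial.X_pow_comp]

lemma transApply_moments (U : Fin N → (Polynomial ℂ →ₗ[ℂ] ℂ)) (Q : MatPoly N)
    (h : Polynomial ℂ) (d : ℕ)
    (hQd : ∀ i j, (Q i j).natDegree ≤ d) (P : Fin N → Polynomial ℂ) :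
    transApply U (compH Q h) P
      = ∑ k ∈ Finset.range (d+1), applyU U (fun i => h ^ k * P i) * leadC Q k := by
  ext i j
  simp only [transApply, Matrix.of_apply, Matrix.sum_apply, Matrix.mul_apply,
    compH, Matrix.map_apply, applyU, leadC]
  have key : ∀ s, U s ((Q s j).comp h * P i)
      = ∑ k ∈ Finset.range (d+1), U s (h ^ k * P i) * (Q s j).coeff k := by
    intro s
    rw [comp_eq_sum_coeff (Q s j) h d (hQd s j), Finset.sum_mul, map_sum]
    refine Finset.sum_congr rfl fun k _ => ?_
    rw [mul_assoc, ← smul_eq_C_mul, LinearMap.map_smul, smul_eq_mul, mul_comm]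
  simp only [key]
  exact Finset.sum_comm

lemma coeff_matC_mul (A : Matrix (Fin N) (Fin N) ℂ) (Q : MatPoly N) (k : ℕ)
    (i j : Fin N) : ((A.map C * Q) i j).coeff k = (A * leadC Q k) i j := by
  simp [Matrix.mul_apply, Polynomial.finset_sum_coeff, Polynomial.coeff_C_mul, leadC]

lemma natDegree_matC_mul (A : Matrix (Fin N) (Fin N) ℂ) (Q : MatPoly N) (d : ℕ)
    (hQd : ∀ i j, (Q i j).natDegree ≤ d) (i j : Fin N) :
    ((A.map C * Q) i j).natDegree ≤ d := by
  simp only [Matrix.mul_apply, Matrix.map_apply]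
  exact Polynomial.natDegree_sum_le_of_forall_le _ _ fun u _ =>
    le_trans (Polynomial.natDegree_C_mul_le _ _) (hQd u j)

lemma exists_expansion (V : ℕ → MatPoly N)
    (hdV : ∀ n, ∀ i j, ((V n) i j).natDegree ≤ n)
    (hlV : ∀ n, IsUnit (leadC (V n) n)) (hV0 : V 0 = 1) :
    ∀ m (Q : MatPoly N), (∀ i j, (Q i j).natDegree ≤ m) →
      ∃ A : ℕ → Matrix (Fin N) (Fin N) ℂ,
        Q = ∑ n ∈ Finset.range (m+1), (A n).map C * V n := by
  intro m
  induction m with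
  | zero =>
    intro Q hQ
    refine ⟨fun _ => leadC Q 0, ?_⟩
    rw [Finset.sum_range_one, hV0, mul_one]
    refine Matrix.ext fun i j => ?_
    simp only [Matrix.map_apply, leadC, Matrix.of_apply]
    exact Polynomial.eq_C_of_natDegree_le_zero (hQ i j)
  | succ m ih =>
    intro Q hQ
    set Am : Matrix (Fin N) (Fin N) ℂ := leadC Q (m+1) * (((hlV (m+1)).unit⁻¹ : (Matrix (Fin N) (Fin N) ℂ)ˣ) : Matrix (Fin N) (Fin N) ℂ) with hAm
    have hAmlead : Am * leadC (V (m+1)) (m+1) = leadC Q (m+1) := by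
      rw [hAm, mul_assoc, (hlV (m+1)).val_inv_mul, mul_one]
    set Q' : MatPoly N := Q - Am.map C * V (m+1) with hQ'
    have hQ'deg : ∀ i j, (Q' i j).natDegree ≤ m := by
      intro i j
      rw [Polynomial.natDegree_le_iff_coeff_eq_zero]
      intro k hk
      have hk1 : m + 1 ≤ k := hk
      rcases eq_or_lt_of_le hk1 with hk2 | hk2
      · have : (Q' i j).coeff (m+1) = 0 := by
          simp only [hQ', Matrix.sub_apply, Polynomial.coeff_sub, coeff_matC_mul,
            hAmlead]
          simp [leadC]
        rw [← hk2]; exact this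
      · simp only [hQ', Matrix.sub_apply, Polynomial.coeff_sub]
        rw [Polynomial.coeff_eq_zero_of_natDegree_lt (lt_of_le_of_lt (hQ i j) hk2),
          Polynomial.coeff_eq_zero_of_natDegree_lt
            (lt_of_le_of_lt (natDegree_matC_mul Am (V (m+1)) (m+1) (hdV (m+1)) i j) hk2),
          sub_zero]
    obtain ⟨A', hA'⟩ := ih Q' hQ'deg
    refine ⟨fun n => if n = m + 1 then Am else A' n, ?_⟩
    rw [Finset.sum_range_succ]
    have h1 : ∑ n ∈ Finset.range (m+1),
        ((if n = m + 1 then Am else A' n).map C) * V n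
        = ∑ n ∈ Finset.range (m+1), (A' n).map C * V n := by
      refine Finset.sum_congr rfl fun n hn => ?_
      rw [if_neg (Nat.ne_of_lt (Finset.mem_range.mp hn))]
    rw [h1]
    have h2 : (if m + 1 = m + 1 then Am else A' (m+1)) = Am := if_pos rfl
    simp only [h2, ← hA']
    simp [hQ']

end Chunk2
section Chunk3

variable {N M : ℕ} (c : Fin M → ℂ) (Mu : Fin M → ℕ)
  (e : Fin N ≃ (Σ j : Fin M, Fin (Mu j + 1))) {h : Polynomial ℂ}
  (hh : h = ∏ j, (Polynomial.X - Polynomial.C (c j)) ^ (Mu j + 1))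

lemma deltaMat_eq_applyU (P : Fin N → Polynomial ℂ) :
    deltaMat c Mu e P = applyU (deltaVec c Mu e) P := rfl

include hh in
lemma deltaMat_hpow (P : Fin N → Polynomial ℂ) (k : ℕ) (hk : k ≠ 0) :
    deltaMat c Mu e (fun i => h ^ k * P i) = 0 := by
  ext r s
  simp only [deltaMat, Matrix.of_apply, Matrix.zero_apply]
  exact deltaVec_zero_of_dvd c Mu e h hh s ((dvd_pow_self h hk).mul_right _)

include hh in
lemma deltaMat_Bvec (Q : MatPoly N) :
    deltaMat c Mu e (Bvec Q h) = evalM Q 0 * deltaMat c Mu e (P0 N) := by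
  ext r s
  simp only [deltaMat, Matrix.of_apply, Matrix.mul_apply, evalM, Matrix.map_apply]
  rw [Bvec_apply, map_sum]
  refine Finset.sum_congr rfl fun t _ => ?_
  set p := Q r t with hp
  have hsplit : p.comp h * X ^ (t : ℕ)
      = C (p.eval 0) * X ^ (t : ℕ) + (p.comp h - C (p.eval 0)) * X ^ (t : ℕ) := by
    ring
  have hdvd : h ∣ (p.comp h - C (p.eval 0)) * X ^ (t : ℕ) := by
    refine Dvd.dvd.mul_right ?_ _
    have hx : X ∣ (p - C (p.eval 0)) := by
      rw [Polynomial.X_dvd_iff, Polynomial.coeff_sub, Polynomial.coeff_C,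
        if_pos rfl, Polynomial.coeff_zero_eq_eval_zero, sub_self]
    obtain ⟨q, hq⟩ := hx
    have : p.comp h - C (p.eval 0) = (p - C (p.eval 0)).comp h := by
      rw [Polynomial.sub_comp, Polynomial.C_comp]
    rw [this, hq, Polynomial.mul_comp, Polynomial.X_comp]
    exact Dvd.intro _ rfl
  rw [hsplit, map_add, deltaVec_zero_of_dvd c Mu e h hh s hdvd, add_zero,
    ← smul_eq_C_mul, LinearMap.map_smul, smul_eq_mul]
  rfl

end Chunk3
section Chunk4

def Kmat {N : ℕ} (V G : ℕ → MatPoly N) (m : ℕ) : Matrix (Fin N) (Fin N) ℂ :=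
  ∑ n ∈ Finset.range m, evalM (G n) 0 * evalM (V n) 0

lemma Kzero_eq_Kmat {N : ℕ} (V G : ℕ → MatPoly N) (m : ℕ) :
    Kzero V G m = Kmat V G (m+1) := rfl

lemma Kmat_zero {N : ℕ} (V G : ℕ → MatPoly N) : Kmat V G 0 = 0 :=
  Finset.sum_range_zero _

lemma Kmat_succ {N : ℕ} (V G : ℕ → MatPoly N) (m : ℕ) :
    Kmat V G (m+1) = Kmat V G m + evalM (G m) 0 * evalM (V m) 0 :=
  Finset.sum_range_succ _ _

def Smat {N : ℕ} (D : Matrix (Fin N) (Fin N) ℂ) (V G : ℕ → MatPoly N) (m : ℕ) :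
    Matrix (Fin N) (Fin N) ℂ :=
  1 + D * Kmat V G m

lemma Smat_succ {N : ℕ} (D : Matrix (Fin N) (Fin N) ℂ) (V G : ℕ → MatPoly N) (m : ℕ) :
    Smat D V G (m+1) = Smat D V G m + D * (evalM (G m) 0 * evalM (V m) 0) := by
  unfold Smat
  rw [Kmat_succ]
  noncomm_ring

lemma isUnit_of_mul_unit_right {R : Type*} [Monoid R] {x u : R} (hu : IsUnit u)
    (h : IsUnit (x * u)) : IsUnit x := by
  rw [← hu.unit_spec, Units.isUnit_mul_units] at h
  exact h

lemma eq_of_mul_unit_right {R : Type*} [Monoid R] {x y u : R} (hu : IsUnit u)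
    (h : x * u = y * u) : x = y := hu.mul_right_cancel h

lemma bridge {R : Type*} [Ring R] {D K W Am V0 G0 : R}
    (hS : IsUnit (1 + D * K)) (hAm : IsUnit Am)
    (hW : W * (1 + D * K) = Am * V0) :
    IsUnit (Am + W * (D * G0)) ↔ IsUnit (1 + D * K + D * (G0 * V0)) := by
  set S : R := 1 + D * K with hSd
  set T : R := ↑hS.unit⁻¹ with hTd
  have hT1 : S * T = 1 := hS.mul_val_inv
  have hT2 : T * S = 1 := hS.val_inv_mul
  have hWT : W = Am * V0 * T := by
    calc W = W * (S * T) := by rw [hT1, mul_one]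
    _ = (W * S) * T := by rw [mul_assoc]
    _ = Am * V0 * T := by rw [hW]
  have key : Am + W * (D * G0) = Am * (1 + V0 * (T * (D * G0))) := by
    rw [hWT]; noncomm_ring
  rw [key, ← hAm.unit_spec, Units.isUnit_units_mul, isUnit_one_add_swap_iff]
  have key2 : 1 + (T * (D * G0)) * V0 = T * (S + D * (G0 * V0)) := by
    rw [mul_add, hT2]; noncomm_ring
  rw [key2, hTd, Units.isUnit_units_mul]

end Chunk4

/-- **Quasi-definiteness criterion for the Dirac-modified functional** `Ũ = U + Λδ`:
a left-orthogonal sequence `B̃_m(x) = Ṽ_m(h(x)) P₀(x)` for `Ũ` exists if and only if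
the matrices `I + δ(P₀) Λᵀ K_{m+1}(c_l, c_l)` are nonsingular for all `m ≥ 0`,
where `K_{m+1}(c_l, c_l) = Σ_{j=0}^m G_j(0) V_j(0)`. -/
theorem modified_functional_quasi_definite_iff
    (N M : ℕ) (hN : 1 ≤ N)
    (c : Fin M → ℂ) (hc : Function.Injective c) (Mu : Fin M → ℕ)
    (h : Polynomial ℂ)
    (hh : h = ∏ j, (Polynomial.X - Polynomial.C (c j)) ^ (Mu j + 1))
    (hdeg : h.natDegree = N)
    (e : Fin N ≃ (Σ j : Fin M, Fin (Mu j + 1)))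
    (U : Fin N → (Polynomial ℂ →ₗ[ℂ] ℂ))
    (Λ : Matrix (Fin N) (Fin N) ℂ)
    (V G : ℕ → MatPoly N)
    (hV0I : V 0 = 1)
    (hdV : ∀ m, ∀ i j, ((V m) i j).natDegree ≤ m)
    (hlV : ∀ m, IsUnit (leadC (V m) m))
    (hdG : ∀ m, ∀ i j, ((G m) i j).natDegree ≤ m)
    (hlG : ∀ m, IsUnit (leadC (G m) m))
    (hleft : ∀ m, ∀ k < m, applyU U (fun i => h ^ k * Bvec (V m) h i) = 0)
    (hleftn : ∀ m, IsUnit (applyU U fun i => h ^ m * Bvec (V m) h i))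
    (hright : ∀ m, ∀ j < m,
      transApply U (compH (G m) h) (fun i => h ^ j * P0 N i) = 0)
    (hrightn : ∀ m, IsUnit (transApply U (compH (G m) h) fun i => h ^ m * P0 N i))
    (hbi : ∀ n m, transApply U (compH (G n) h) (Bvec (V m) h) =
      if n = m then 1 else 0) :
    (∃ Vt : ℕ → MatPoly N,
        (∀ m, ∀ i j, ((Vt m) i j).natDegree ≤ m) ∧
        (∀ m, IsUnit (leadC (Vt m) m)) ∧
        (∀ m, ∀ k < m, applyUt U Λ c Mu e (fun i => h ^ k * Bvec (Vt m) h i) = 0) ∧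
        (∀ m, IsUnit (applyUt U Λ c Mu e fun i => h ^ m * Bvec (Vt m) h i)))
      ↔ ∀ m : ℕ, IsUnit ((1 : Matrix (Fin N) (Fin N) ℂ) +
          deltaMat c Mu e (P0 N) * Λ.transpose * Kzero V G m) := by
  classical
  set Δ : Matrix (Fin N) (Fin N) ℂ := deltaMat c Mu e (P0 N) with hΔd
  set D : Matrix (Fin N) (Fin N) ℂ := Δ * Λ.transpose with hDd
  -- rewriting the right-hand side matrices
  have hre : ∀ m, (1 : Matrix (Fin N) (Fin N) ℂ) + D * Kzero V G m
      = Smat D V G (m+1) := by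
    intro m
    rw [Kzero_eq_Kmat]
    rfl
  -- the Dirac-delta matrix of a scaled B-vector
  have hdel : ∀ (Q : MatPoly N) (k : ℕ),
      deltaMat c Mu e (fun i => h ^ k * Bvec Q h i)
        = if k = 0 then evalM Q 0 * Δ else 0 := by
    intro Q k
    rcases Nat.eq_zero_or_pos k with hk | hk
    · subst hk
      simp only [pow_zero, one_mul, if_pos]
      exact deltaMat_Bvec c Mu e hh Q
    · rw [if_neg (Nat.pos_iff_ne_zero.mp hk)]
      exact deltaMat_hpow c Mu e hh _ k (Nat.pos_iff_ne_zero.mp hk)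
  -- the modified functional on a scaled B-vector
  have hUt : ∀ (Q : MatPoly N) (k : ℕ),
      applyUt U Λ c Mu e (fun i => h ^ k * Bvec Q h i)
        = applyU U (fun i => h ^ k * Bvec Q h i)
          + (if k = 0 then evalM Q 0 * D else 0) := by
    intro Q k
    rw [applyUt, hdel]
    congr 1
    split_ifs
    · rw [hDd, mul_assoc]
    · rw [Matrix.zero_mul]
  -- pairing against the dual family recovers coefficients
  have hpair : ∀ (A : ℕ → Matrix (Fin N) (Fin N) ℂ) (m n : ℕ), n < m + 1 →
      transApply U (compH (G n) h)
        (Bvec (∑ n' ∈ Finset.range (m+1), (A n').map C * V n') h) = A n := by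
    intro A m n hn
    have hBv : Bvec (∑ n' ∈ Finset.range (m+1), (A n').map C * V n') h
        = fun i => ∑ n' ∈ Finset.range (m+1), ∑ u, C (A n' i u) * Bvec (V n') h u :=
      funext fun i => Bvec_comb _ _ _ _ _
    rw [hBv, transApply_comb]
    simp only [hbi, mul_ite, mul_one, mul_zero]
    rw [Finset.sum_ite_eq (Finset.range (m+1)) n A,
      if_pos (Finset.mem_range.mpr hn)]
  -- the pairing written via moments
  have hstep : ∀ (P : Fin N → Polynomial ℂ) (W : Matrix (Fin N) (Fin N) ℂ) (n : ℕ),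
      (∀ k, k < n → applyU U (fun i => h ^ k * P i) = if k = 0 then -(W * D) else 0) →
      transApply U (compH (G n) h) P
        = (if n = 0 then 0 else -(W * (D * evalM (G n) 0)))
          + applyU U (fun i => h ^ n * P i) * leadC (G n) n := by
    intro P W n hm
    rw [transApply_moments U (G n) h n (hdG n) P, Finset.sum_range_succ]
    congr 1
    rcases Nat.eq_zero_or_pos n with hn | hn
    · subst hn; simp
    · rw [if_neg (Nat.pos_iff_ne_zero.mp hn)]
      have hterm : ∀ k ∈ Finset.range n,
          applyU U (fun i => h ^ k * P i) * leadC (G n) k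
            = if k = 0 then (-(W * D)) * leadC (G n) k else 0 := by
        intro k hk
        rw [hm k (Finset.mem_range.mp hk)]
        split_ifs
        · rfl
        · rw [Matrix.zero_mul]
      rw [Finset.sum_congr rfl hterm,
        Finset.sum_ite_eq' (Finset.range n) 0 (fun k => (-(W * D)) * leadC (G n) k),
        if_pos (Finset.mem_range.mpr hn), ← evalM_zero_eq_leadC]
      noncomm_ring
  have hG0u : IsUnit (evalM (G 0) 0) := by
    rw [evalM_zero_eq_leadC]; exact hlG 0
  -- ===== analysis direction =====
  have analysis : ∀ m (Vt : MatPoly N), (∀ i j, ((Vt) i j).natDegree ≤ m) →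
      IsUnit (leadC Vt m) →
      (∀ k < m, applyUt U Λ c Mu e (fun i => h ^ k * Bvec Vt h i) = 0) →
      IsUnit (applyUt U Λ c Mu e fun i => h ^ m * Bvec Vt h i) →
      IsUnit (Smat D V G m) → IsUnit (Smat D V G (m+1)) := by
    intro m Vt hdegm hlead horth hnons hSm
    obtain ⟨A, hexp⟩ := exists_expansion V hdV hlV hV0I m Vt hdegm
    subst hexp
    set W : Matrix (Fin N) (Fin N) ℂ :=
      evalM (∑ n ∈ Finset.range (m+1), (A n).map C * V n) 0 with hWd
    -- moments from orthogonality
    have hmom : ∀ k, k < m →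
        applyU U (fun i => h ^ k *
          Bvec (∑ n ∈ Finset.range (m+1), (A n).map C * V n) h i)
          = if k = 0 then -(W * D) else 0 := by
      intro k hk
      have h0 := horth k hk
      rw [hUt] at h0
      have h1 := eq_neg_of_add_eq_zero_left h0
      rw [h1]
      split_ifs
      · rw [← hWd]
      · rw [neg_zero]
    -- coefficients below the top
    have hAval : ∀ n, n < m → A n = -(W * (D * evalM (G n) 0)) := by
      intro n hn
      have h1 := hpair A m n (Nat.lt_succ_of_lt hn)
      have h2 := hstep _ W n (fun k hk => hmom k (lt_trans hk hn))
      rw [h2] at h1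
      rcases Nat.eq_zero_or_pos n with hn0 | hn0
      · subst hn0
        rw [if_pos rfl, zero_add, hmom 0 hn, if_pos rfl, ← evalM_zero_eq_leadC] at h1
        rw [← h1]
        noncomm_ring
      · rw [if_neg (Nat.pos_iff_ne_zero.mp hn0), hmom n hn,
          if_neg (Nat.pos_iff_ne_zero.mp hn0), Matrix.zero_mul, add_zero] at h1
        exact h1.symm
    -- the W equation
    have hWS : W * Smat D V G m = A m * evalM (V m) 0 := by
      have h1 : W = ∑ n ∈ Finset.range (m+1), A n * evalM (V n) 0 := by
        rw [hWd]; exact evalM_comb _ _ _ _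
      rw [Finset.sum_range_succ] at h1
      have h2 : ∀ n ∈ Finset.range m, A n * evalM (V n) 0
          = -((W * D) * (evalM (G n) 0 * evalM (V n) 0)) := by
        intro n hn
        rw [hAval n (Finset.mem_range.mp hn)]
        noncomm_ring
      rw [Finset.sum_congr rfl h2] at h1
      have h3 : ∑ n ∈ Finset.range m, -((W * D) * (evalM (G n) 0 * evalM (V n) 0))
          = -(W * D * Kmat V G m) := by
        unfold Kmat
        rw [Finset.mul_sum, Finset.sum_neg_distrib]
      rw [h3] at h1
      have h4 : W * Smat D V G m = W + W * D * Kmat V G m := by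
        unfold Smat; noncomm_ring
      rw [h4]
      nth_rewrite 1 [h1]
      noncomm_ring
    -- the top coefficient is a unit
    have hAmu : IsUnit (A m) := by
      have h1 := leadC_comb A V hdV m
      rw [h1] at hlead
      exact isUnit_of_mul_unit_right (hlV m) hlead
    -- identity for the modified functional at level m
    have hCI : applyUt U Λ c Mu e (fun i => h ^ m *
          Bvec (∑ n ∈ Finset.range (m+1), (A n).map C * V n) h i)
          * leadC (G m) m = A m + W * (D * evalM (G m) 0) := by
      have h1 := hpair A m m (Nat.lt_succ_self m)
      have h2 := hstep _ W m hmom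
      rw [h2] at h1
      rw [hUt, ← hWd, Matrix.add_mul]
      rcases Nat.eq_zero_or_pos m with hm0 | hm0
      · subst hm0
        rw [if_pos rfl, zero_add] at h1
        rw [if_pos rfl, h1, ← evalM_zero_eq_leadC]
        noncomm_ring
      · rw [if_neg (Nat.pos_iff_ne_zero.mp hm0)] at h1 ⊢
        rw [Matrix.zero_mul, add_zero]
        have h4 := congrArg (fun X => X + (W * (D * evalM (G m) 0))) h1
        rw [← h4]
        abel
    have hCIu : IsUnit (A m + W * (D * evalM (G m) 0)) := by
      rw [← hCI]
      exact (hnons.mul (hlG m))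
    rw [Smat_succ]
    exact (bridge hSm hAmu hWS).mp hCIu
  -- ===== synthesis direction =====
  have synthesis : ∀ m, IsUnit (Smat D V G m) → IsUnit (Smat D V G (m+1)) →
      ∃ Vt : MatPoly N, (∀ i j, ((Vt) i j).natDegree ≤ m) ∧ IsUnit (leadC Vt m) ∧
        (∀ k < m, applyUt U Λ c Mu e (fun i => h ^ k * Bvec Vt h i) = 0) ∧
        IsUnit (applyUt U Λ c Mu e fun i => h ^ m * Bvec Vt h i) := by
    intro m hSm hSm1
    set T : Matrix (Fin N) (Fin N) ℂ := ↑hSm.unit⁻¹ with hTd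
    set W0 : Matrix (Fin N) (Fin N) ℂ := evalM (V m) 0 * T with hW0d
    have hW0S : W0 * Smat D V G m = evalM (V m) 0 := by
      rw [hW0d, mul_assoc, hTd, IsUnit.val_inv_mul hSm, mul_one]
    set A : ℕ → Matrix (Fin N) (Fin N) ℂ :=
      fun n => if n = m then 1 else -(W0 * (D * evalM (G n) 0)) with hAd
    have hAmv : A m = 1 := by rw [hAd]; simp
    have hAnv : ∀ n, n ≠ m → A n = -(W0 * (D * evalM (G n) 0)) := by
      intro n hn; rw [hAd]; simp [hn]
    set Vt : MatPoly N := ∑ n ∈ Finset.range (m+1), (A n).map C * V n with hVtd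
    -- value at 0
    have hWeq : evalM Vt 0 = W0 := by
      rw [hVtd, evalM_comb, Finset.sum_range_succ, hAmv, one_mul]
      have h2 : ∀ n ∈ Finset.range m, A n * evalM (V n) 0
          = -((W0 * D) * (evalM (G n) 0 * evalM (V n) 0)) := by
        intro n hn
        rw [hAnv n (Nat.ne_of_lt (Finset.mem_range.mp hn))]
        noncomm_ring
      rw [Finset.sum_congr rfl h2]
      have h3 : ∑ n ∈ Finset.range m, -((W0 * D) * (evalM (G n) 0 * evalM (V n) 0))
          = -(W0 * D * Kmat V G m) := by
        unfold Kmat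
        rw [Finset.mul_sum, Finset.sum_neg_distrib]
      rw [h3, ← hW0S]
      unfold Smat
      noncomm_ring
    -- moments by strong induction
    have hmom : ∀ k, k < m →
        applyU U (fun i => h ^ k * Bvec Vt h i) = if k = 0 then -(W0 * D) else 0 := by
      intro k
      induction k using Nat.strong_induction_on with
      | _ k ih =>
        intro hkm
        have h1 : transApply U (compH (G k) h) (Bvec Vt h) = A k := by
          rw [hVtd]; exact hpair A m k (Nat.lt_succ_of_lt hkm)
        have h2 := hstep (Bvec Vt h) W0 k (fun j hj => ih j hj (lt_trans hj hkm))
        rw [h2, hAnv k (Nat.ne_of_lt hkm)] at h1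
        rcases Nat.eq_zero_or_pos k with hk0 | hk0
        · subst hk0
          rw [if_pos rfl, zero_add] at h1
          rw [if_pos rfl]
          refine eq_of_mul_unit_right hG0u ?_
          rw [evalM_zero_eq_leadC, h1, ← evalM_zero_eq_leadC]
          noncomm_ring
        · rw [if_neg (Nat.pos_iff_ne_zero.mp hk0)] at h1
          rw [if_neg (Nat.pos_iff_ne_zero.mp hk0)]
          have h3 : applyU U (fun i => h ^ k * Bvec Vt h i) * leadC (G k) k = 0 := by
            have h4 := congrArg (fun X => X + (W0 * (D * evalM (G k) 0))) h1
            simp only [neg_add_cancel] at h4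
            rw [← h4]
            abel
          refine eq_of_mul_unit_right (hlG k) ?_
          rw [h3, Matrix.zero_mul]
    refine ⟨Vt, ?_, ?_, ?_, ?_⟩
    · intro i j; rw [hVtd]; exact natDegree_comb A V hdV m i j
    · rw [hVtd, leadC_comb A V hdV m, hAmv, one_mul]; exact hlV m
    · intro k hk
      rw [hUt, hWeq, hmom k hk]
      split_ifs
      · rw [neg_add_cancel]
      · rw [add_zero]
    · -- nonsingularity at level m
      have h1 : transApply U (compH (G m) h) (Bvec Vt h) = A m := by
        rw [hVtd]; exact hpair A m m (Nat.lt_succ_self m)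
      have h2 := hstep (Bvec Vt h) W0 m hmom
      rw [h2, hAmv] at h1
      have hP : IsUnit ((1 : Matrix (Fin N) (Fin N) ℂ) + W0 * (D * evalM (G m) 0)) := by
        have hW1 : W0 * Smat D V G m = (1 : Matrix (Fin N) (Fin N) ℂ) * evalM (V m) 0 := by
          rw [hW0S, one_mul]
        have hs1 : IsUnit ((1 : Matrix (Fin N) (Fin N) ℂ) + D * Kmat V G m
            + D * (evalM (G m) 0 * evalM (V m) 0)) := by
          have h5 := hSm1
          rw [Smat_succ] at h5
          exact h5
        exact (bridge hSm isUnit_one hW1).mpr hs1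
      have hE : applyUt U Λ c Mu e (fun i => h ^ m * Bvec Vt h i) * leadC (G m) m
          = 1 + W0 * (D * evalM (G m) 0) := by
        rw [hUt, hWeq, Matrix.add_mul]
        rcases Nat.eq_zero_or_pos m with hm0 | hm0
        · subst hm0
          rw [if_pos rfl, zero_add] at h1
          rw [if_pos rfl, ← h1, ← evalM_zero_eq_leadC]
          noncomm_ring
        · rw [if_neg (Nat.pos_iff_ne_zero.mp hm0)] at h1 ⊢
          rw [Matrix.zero_mul, add_zero]
          have h4 := congrArg (fun X => X + (W0 * (D * evalM (G m) 0))) h1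
          rw [← h4]
          abel
      refine isUnit_of_mul_unit_right (hlG m) ?_
      rw [hE]
      exact hP
  -- ===== conclusion =====
  constructor
  · rintro ⟨Vt, hdegs, hleads, horths, hnonss⟩ m
    rw [hre]
    have hall : ∀ k, IsUnit (Smat D V G k) := by
      intro k
      induction k with
      | zero => rw [Smat, Kmat_zero, Matrix.mul_zero, add_zero]; exact isUnit_one
      | succ k ih =>
        exact analysis k (Vt k) (hdegs k) (hleads k) (horths k) (hnonss k) ih
    exact hall (m+1)
  · intro hR
    have hS : ∀ k, IsUnit (Smat D V G k) := by
      intro k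
      cases k with
      | zero => rw [Smat, Kmat_zero, Matrix.mul_zero, add_zero]; exact isUnit_one
      | succ k =>
        have := hR k
        rwa [hre] at this
    choose Vt h1 h2 h3 h4 using fun m => synthesis m (hS m) (hS (m+1))
    exact ⟨Vt, h1, h2, h3, h4⟩

end
end

section
/- Connection formula for the Dirac-modified orthogonal polynomials: under the stated setup, assume a left-orthogonal sequence {B̃_m} for Ũ exists, with B̃_m(x) = Ṽ_m(h(x))P_0(x), and set Δ̃_m = (h^m Ũ)(B̃_m) and D_m = Δ̃_m β_m^m, where β_m^m is the leading coefficient of G_m. Then D_m is nonsingular and, for every m ≥ 0 and all x ∈ ℂ: Ṽ_m(h(x)) = D_m V_m(h(x)) − Ṽ_m(0)·δ(P_0)·Λ^T·K_{m+1}(x, c_l), where K_{m+1}(x, c_l) = Σ_{j=0}^{m} G_j(0) V_j(h(x)) and c_l is any zero of h; in particular, evaluating at x = c_l: Ṽ_m(0)·( I + δ(P_0)Λ^T K_{m+1}(c_l, c_l) ) = D_m V_m(0). -/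
open Polynomial Matrix Finset

noncomputable section

namespace ConnAux

variable {N : ℕ}

/-- scalar matrix times matrix polynomial -/
def smulM (A : Matrix (Fin N) (Fin N) ℂ) (Q : MatPoly N) : MatPoly N :=
  A.map Polynomial.C * Q

lemma smulM_apply (A : Matrix (Fin N) (Fin N) ℂ) (Q : MatPoly N) (i j : Fin N) :
    smulM A Q i j = ∑ t, Polynomial.C (A i t) * Q t j := by
  simp [smulM, Matrix.mul_apply]

lemma smulM_coeff (A : Matrix (Fin N) (Fin N) ℂ) (Q : MatPoly N) (i j : Fin N) (d : ℕ) :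
    ((smulM A Q) i j).coeff d = ∑ t, A i t * (Q t j).coeff d := by
  simp [smulM_apply, Polynomial.finset_sum_coeff, Polynomial.coeff_C_mul]

lemma evalM_smulM (A : Matrix (Fin N) (Fin N) ℂ) (Q : MatPoly N) (z : ℂ) :
    evalM (smulM A Q) z = A * evalM Q z := by
  ext i j
  simp [evalM, smulM_apply, Matrix.mul_apply, Polynomial.eval_finset_sum]

lemma evalM_sum (s : Finset ℕ) (F : ℕ → MatPoly N) (z : ℂ) :
    evalM (∑ k ∈ s, F k) z = ∑ k ∈ s, evalM (F k) z := by
  ext i j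
  simp [evalM, Matrix.sum_apply, Polynomial.eval_finset_sum]

lemma leadC_zero_eq_evalM_zero (Q : MatPoly N) : leadC Q 0 = evalM Q 0 := by
  ext i j
  simp [leadC, evalM, Polynomial.coeff_zero_eq_eval_zero]

/-- Expansion of a matrix polynomial of degree ≤ m in the basis `{V k}`. -/
lemma expand (V : ℕ → MatPoly N) (hdV : ∀ m, ∀ i j, ((V m) i j).natDegree ≤ m)
    (hlV : ∀ m, IsUnit (leadC (V m) m)) :
    ∀ m (W : MatPoly N), (∀ i j, (W i j).natDegree ≤ m) →
      ∃ A : ℕ → Matrix (Fin N) (Fin N) ℂ,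
        W = ∑ k ∈ Finset.range (m + 1), smulM (A k) (V k) := by
  intro m
  induction m with
  | zero =>
    intro W hW
    refine ⟨fun _ => leadC W 0 * ((hlV 0).unit⁻¹).val, ?_⟩
    have hAV : (leadC W 0 * ((hlV 0).unit⁻¹).val) * leadC (V 0) 0 = leadC W 0 := by
      rw [mul_assoc, IsUnit.val_inv_mul, mul_one]
    refine Matrix.ext fun i j => ?_
    rw [Finset.sum_range_one, smulM_apply]
    show W i j = ∑ t, Polynomial.C ((leadC W 0 * ((hlV 0).unit⁻¹).val) i t) * (V 0) t j
    have hV0 : ∀ t, (V 0) t j = Polynomial.C (leadC (V 0) 0 t j) :=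
      fun t => Polynomial.eq_C_of_natDegree_le_zero (hdV 0 t j)
    calc W i j = Polynomial.C ((W i j).coeff 0) :=
          Polynomial.eq_C_of_natDegree_le_zero (hW i j)
      _ = Polynomial.C (((leadC W 0 * ((hlV 0).unit⁻¹).val) * leadC (V 0) 0) i j) := by
          rw [hAV]; rfl
      _ = ∑ t, Polynomial.C ((leadC W 0 * ((hlV 0).unit⁻¹).val) i t) * (V 0) t j := by
          rw [Matrix.mul_apply, map_sum]
          exact Finset.sum_congr rfl fun t _ => by rw [hV0 t, ← Polynomial.C_mul]
  | succ m ih =>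
    intro W hW
    set Am : Matrix (Fin N) (Fin N) ℂ := leadC W (m+1) * ((hlV (m+1)).unit⁻¹).val with hAmdef
    have hAV : Am * leadC (V (m+1)) (m+1) = leadC W (m+1) := by
      rw [hAmdef, mul_assoc, IsUnit.val_inv_mul, mul_one]
    set W' : MatPoly N := W - smulM Am (V (m+1)) with hW'def
    have hdW' : ∀ i j, (W' i j).natDegree ≤ m := by
      intro i j
      rw [Polynomial.natDegree_le_iff_coeff_eq_zero]
      intro d hd
      have hWe : W' i j = W i j - smulM Am (V (m+1)) i j := rfl
      rw [hWe, Polynomial.coeff_sub]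
      rcases eq_or_lt_of_le (Nat.succ_le_of_lt hd) with hdm | hdm
      · rw [smulM_coeff, ← hdm]
        have : ∑ t, Am i t * ((V (m+1)) t j).coeff (m+1)
            = (Am * leadC (V (m+1)) (m+1)) i j := by
          simp [Matrix.mul_apply, leadC]
        rw [this, hAV]
        simp [leadC]
      · have h1 : (W i j).coeff d = 0 :=
          Polynomial.coeff_eq_zero_of_natDegree_lt (lt_of_le_of_lt (hW i j) hdm)
        have h2 : ((smulM Am (V (m+1))) i j).coeff d = 0 := by
          rw [smulM_coeff]
          refine Finset.sum_eq_zero fun t _ => ?_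
          rw [Polynomial.coeff_eq_zero_of_natDegree_lt
            (lt_of_le_of_lt (hdV (m+1) t j) hdm), mul_zero]
        rw [h1, h2, sub_zero]
    obtain ⟨A', hA'⟩ := ih W' hdW'
    refine ⟨fun k => if k = m+1 then Am else A' k, ?_⟩
    rw [Finset.sum_range_succ]
    have hs : ∑ k ∈ Finset.range (m+1),
        smulM (if k = m+1 then Am else A' k) (V k)
        = ∑ k ∈ Finset.range (m+1), smulM (A' k) (V k) := by
      refine Finset.sum_congr rfl fun k hk => ?_
      rw [if_neg (by rw [Finset.mem_range] at hk; omega)]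
    rw [hs, ← hA']
    show W = W' + smulM (if m + 1 = m + 1 then Am else A' (m+1)) (V (m+1))
    rw [if_pos rfl, hW'def]
    abel

/-- `((G∘h)ᵀ U)(P) = Σ_r (h^r U)(P) β^r` where `β^r` are matrix coefficients of `G`. -/
lemma transApply_expand (U : Fin N → (Polynomial ℂ →ₗ[ℂ] ℂ)) (h : Polynomial ℂ)
    (n : ℕ) (Q : MatPoly N) (hQ : ∀ i j, (Q i j).natDegree ≤ n)
    (P : Fin N → Polynomial ℂ) :
    transApply U (compH Q h) P
      = ∑ r ∈ Finset.range (n + 1), applyU U (fun i => h ^ r * P i) * leadC Q r := by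
  ext i j
  have hQsj : ∀ s : Fin N, (Q s j).comp h
      = ∑ r ∈ Finset.range (n+1), Polynomial.C ((Q s j).coeff r) * h ^ r := by
    intro s
    conv_lhs => rw [(Q s j).as_sum_range' (n+1) (Nat.lt_succ_of_le (hQ s j))]
    simp [Polynomial.comp, Polynomial.eval₂_finset_sum]
  have key : ∀ s : Fin N, U s ((Q s j).comp h * P i)
      = ∑ r ∈ Finset.range (n+1), (Q s j).coeff r * U s (h ^ r * P i) := by
    intro s
    rw [hQsj s, Finset.sum_mul, map_sum]
    refine Finset.sum_congr rfl fun r _ => ?_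
    rw [mul_assoc, ← Polynomial.smul_eq_C_mul, _root_.map_smul, smul_eq_mul]
  simp only [transApply, compH, Matrix.of_apply, Matrix.map_apply, key]
  rw [Finset.sum_comm]
  rw [Matrix.sum_apply]
  refine Finset.sum_congr rfl fun r _ => ?_
  rw [Matrix.mul_apply]
  exact Finset.sum_congr rfl fun s _ => by
    simp [applyU, leadC, mul_comm]

/-- iterated derivative of `(X - a)^s * q` vanishes at `a` for orders `< s`. -/
lemma eval_iter_deriv (a : ℂ) :
    ∀ (i : ℕ) (s : ℕ) (q : Polynomial ℂ), i < s →
      (Polynomial.derivative^[i] ((Polynomial.X - Polynomial.C a) ^ s * q)).eval a = 0 := by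
  intro i
  induction i with
  | zero =>
    intro s q hs
    have hs' : s ≠ 0 := by omega
    simp [Function.iterate_zero, Polynomial.eval_pow, zero_pow hs']
  | succ i ih =>
    intro s q hs
    obtain ⟨t, rfl⟩ : ∃ t, s = t + 1 := ⟨s - 1, by omega⟩
    rw [Function.iterate_succ_apply]
    have hd : Polynomial.derivative ((Polynomial.X - Polynomial.C a) ^ (t+1) * q)
        = (Polynomial.X - Polynomial.C a) ^ t *
            (Polynomial.C ((t:ℂ)+1) * q +
              (Polynomial.X - Polynomial.C a) * Polynomial.derivative q) := by
      rw [Polynomial.derivative_mul, Polynomial.derivative_pow]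
      simp only [Nat.add_sub_cancel, Polynomial.derivative_sub, Polynomial.derivative_X,
        Polynomial.derivative_C, sub_zero, Nat.cast_add, Nat.cast_one]
      ring
    rw [hd]
    exact ih t _ (by omega)

end ConnAux

namespace ConnAux

lemma dd_apply (a : ℂ) (i : ℕ) (p : Polynomial ℂ) :
    dd a i p = (Polynomial.derivative^[i] p).eval a := by
  simp [dd, Polynomial.leval_apply, Module.End.pow_apply]

section Delta

variable {N M : ℕ} (c : Fin M → ℂ) (Mu : Fin M → ℕ)
  (e : Fin N ≃ (Σ j : Fin M, Fin (Mu j + 1)))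
  (h : Polynomial ℂ)
  (hh : h = ∏ j, (Polynomial.X - Polynomial.C (c j)) ^ (Mu j + 1))

include hh

lemma dd_h_mul (j : Fin M) (i : ℕ) (hi : i < Mu j + 1) (p : Polynomial ℂ) :
    dd (c j) i (h * p) = 0 := by
  rw [dd_apply]
  have hfac : h * p = (Polynomial.X - Polynomial.C (c j)) ^ (Mu j + 1) *
      ((∏ k ∈ Finset.univ.erase j, (Polynomial.X - Polynomial.C (c k)) ^ (Mu k + 1)) * p) := by
    rw [hh, ← Finset.mul_prod_erase _ _ (Finset.mem_univ j)]
    ring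
  rw [hfac]
  exact eval_iter_deriv (c j) i (Mu j + 1) _ hi

lemma dd_comp_mul (j : Fin M) (i : ℕ) (hi : i < Mu j + 1) (p q : Polynomial ℂ) :
    dd (c j) i (p.comp h * q) = p.eval 0 * dd (c j) i q := by
  have hp : p.comp h = Polynomial.C (p.coeff 0) + h * ((p.divX).comp h) := by
    have h0 := congrArg (fun q : Polynomial ℂ => q.comp h) p.X_mul_divX_add
    simp only [Polynomial.add_comp, Polynomial.mul_comp, Polynomial.X_comp,
      Polynomial.C_comp] at h0
    rw [← h0]; ring
  rw [hp, add_mul, map_add, mul_assoc, dd_h_mul c Mu h hh j i hi, add_zero,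
    ← Polynomial.smul_eq_C_mul, _root_.map_smul, smul_eq_mul, Polynomial.coeff_zero_eq_eval_zero]

lemma deltaMat_h_mul (P : Fin N → Polynomial ℂ) :
    deltaMat c Mu e (fun i => h * P i) = 0 := by
  ext r s
  have := dd_h_mul c Mu h hh (e s).1 ((e s).2 : ℕ) (e s).2.isLt (P r)
  simpa [deltaMat, deltaVec] using this

lemma deltaMat_Bvec (W : MatPoly N) :
    deltaMat c Mu e (Bvec W h) = evalM W 0 * deltaMat c Mu e (P0 N) := by
  ext r s
  have hB : Bvec W h r = ∑ t, (W r t).comp h * P0 N t := by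
    simp [Bvec, Matrix.mulVec, dotProduct, compH]
  simp only [deltaMat, deltaVec, Matrix.of_apply, hB, map_sum, Matrix.mul_apply, evalM,
    Matrix.map_apply]
  exact Finset.sum_congr rfl fun t _ =>
    dd_comp_mul c Mu h hh (e s).1 ((e s).2 : ℕ) (e s).2.isLt (W r t) (P0 N t)

end Delta

lemma Bvec_smulM {N : ℕ} (A : Matrix (Fin N) (Fin N) ℂ) (Q : MatPoly N)
    (h : Polynomial ℂ) (i : Fin N) :
    Bvec (smulM A Q) h i = ∑ t, Polynomial.C (A i t) * Bvec Q h t := by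
  simp only [Bvec, Matrix.mulVec, dotProduct, compH, Matrix.map_apply, smulM_apply]
  have : ∀ j, (∑ t, Polynomial.C (A i t) * Q t j).comp h
      = ∑ t, Polynomial.C (A i t) * (Q t j).comp h := by
    intro j
    simp [Polynomial.comp, Polynomial.eval₂_finset_sum]
  simp only [this, Finset.sum_mul, Finset.mul_sum, mul_assoc]
  exact Finset.sum_comm

lemma Bvec_sum {N : ℕ} (s : Finset ℕ) (F : ℕ → MatPoly N) (h : Polynomial ℂ) (i : Fin N) :
    Bvec (∑ k ∈ s, F k) h i = ∑ k ∈ s, Bvec (F k) h i := by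
  simp only [Bvec, Matrix.mulVec, dotProduct, compH, Matrix.map_apply, Matrix.sum_apply]
  rw [Finset.sum_comm]
  refine Finset.sum_congr rfl fun j _ => ?_
  rw [← Finset.sum_mul]
  congr 1
  simp [Polynomial.comp, Polynomial.eval₂_finset_sum]

lemma transApply_Bvec_expand {N : ℕ} (U : Fin N → (Polynomial ℂ →ₗ[ℂ] ℂ)) (Q : MatPoly N)
    (A : ℕ → Matrix (Fin N) (Fin N) ℂ) (V : ℕ → MatPoly N) (s : Finset ℕ) (h : Polynomial ℂ) :
    transApply U Q (Bvec (∑ k ∈ s, smulM (A k) (V k)) h)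
      = ∑ k ∈ s, A k * transApply U Q (Bvec (V k) h) := by
  ext i j
  simp only [transApply, Matrix.of_apply, Bvec_sum, Bvec_smulM, Matrix.sum_apply,
    Matrix.mul_apply]
  have key : ∀ s' : Fin N,
      U s' (Q s' j * ∑ k ∈ s, ∑ t, Polynomial.C (A k i t) * Bvec (V k) h t)
      = ∑ k ∈ s, ∑ t, A k i t * U s' (Q s' j * Bvec (V k) h t) := by
    intro s'
    rw [Finset.mul_sum, map_sum]
    refine Finset.sum_congr rfl fun k _ => ?_
    rw [Finset.mul_sum, map_sum]
    refine Finset.sum_congr rfl fun t _ => ?_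
    rw [mul_left_comm, ← Polynomial.smul_eq_C_mul, _root_.map_smul, smul_eq_mul]
  simp only [key]
  rw [Finset.sum_comm]
  refine Finset.sum_congr rfl fun k _ => ?_
  rw [Finset.sum_comm]
  refine Finset.sum_congr rfl fun t _ => ?_
  rw [Finset.mul_sum]

end ConnAux

/-- **Connection formula for the Dirac-modified orthogonal polynomials.**  With
`D_m = Δ̃_m β_m^m` (`Δ̃_m = (h^m Ũ)(B̃_m)`, `β_m^m` the leading coefficient of `G_m`),
`D_m` is nonsingular and
`Ṽ_m(h(x)) = D_m V_m(h(x)) - Ṽ_m(0) δ(P₀) Λᵀ K_{m+1}(x, c_l)` for all `x ∈ ℂ`,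
where `K_{m+1}(x, c_l) = Σ_{j=0}^m G_j(0) V_j(h(x))`; in particular, at `x = c_l`:
`Ṽ_m(0)(I + δ(P₀) Λᵀ K_{m+1}(c_l, c_l)) = D_m V_m(0)`. -/
theorem modified_polynomials_connection_formula
    (N M : ℕ) (hN : 1 ≤ N)
    (c : Fin M → ℂ) (hc : Function.Injective c) (Mu : Fin M → ℕ)
    (h : Polynomial ℂ)
    (hh : h = ∏ j, (Polynomial.X - Polynomial.C (c j)) ^ (Mu j + 1))
    (hdeg : h.natDegree = N)
    (e : Fin N ≃ (Σ j : Fin M, Fin (Mu j + 1)))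
    (U : Fin N → (Polynomial ℂ →ₗ[ℂ] ℂ))
    (Λ : Matrix (Fin N) (Fin N) ℂ)
    (V G : ℕ → MatPoly N)
    (hV0I : V 0 = 1)
    (hdV : ∀ m, ∀ i j, ((V m) i j).natDegree ≤ m)
    (hlV : ∀ m, IsUnit (leadC (V m) m))
    (hdG : ∀ m, ∀ i j, ((G m) i j).natDegree ≤ m)
    (hlG : ∀ m, IsUnit (leadC (G m) m))
    (hleft : ∀ m, ∀ k < m, applyU U (fun i => h ^ k * Bvec (V m) h i) = 0)
    (hleftn : ∀ m, IsUnit (applyU U fun i => h ^ m * Bvec (V m) h i))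
    (hright : ∀ m, ∀ j < m,
      transApply U (compH (G m) h) (fun i => h ^ j * P0 N i) = 0)
    (hrightn : ∀ m, IsUnit (transApply U (compH (G m) h) fun i => h ^ m * P0 N i))
    (hbi : ∀ n m, transApply U (compH (G n) h) (Bvec (V m) h) =
      if n = m then 1 else 0)
    -- a left-orthogonal sequence for the modified functional `Ũ = U + Λδ`
    (Vt : ℕ → MatPoly N)
    (hdVt : ∀ m, ∀ i j, ((Vt m) i j).natDegree ≤ m)
    (hlVt : ∀ m, IsUnit (leadC (Vt m) m))
    (hleftt : ∀ m, ∀ k < m, applyUt U Λ c Mu e (fun i => h ^ k * Bvec (Vt m) h i) = 0)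
    (hlefttn : ∀ m, IsUnit (applyUt U Λ c Mu e fun i => h ^ m * Bvec (Vt m) h i)) :
    ∀ m : ℕ,
      IsUnit ((applyUt U Λ c Mu e fun i => h ^ m * Bvec (Vt m) h i) * leadC (G m) m)
      ∧ (∀ x : ℂ, evalM (Vt m) (h.eval x) =
          ((applyUt U Λ c Mu e fun i => h ^ m * Bvec (Vt m) h i) * leadC (G m) m)
              * evalM (V m) (h.eval x)
            - evalM (Vt m) 0 * deltaMat c Mu e (P0 N) * Λ.transpose *
                ∑ j ∈ Finset.range (m + 1), evalM (G j) 0 * evalM (V j) (h.eval x))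
      ∧ evalM (Vt m) 0 *
            ((1 : Matrix (Fin N) (Fin N) ℂ) +
              deltaMat c Mu e (P0 N) * Λ.transpose * Kzero V G m) =
          ((applyUt U Λ c Mu e fun i => h ^ m * Bvec (Vt m) h i) * leadC (G m) m)
            * evalM (V m) 0 := by
  intro m
  classical
  obtain ⟨A, hA⟩ := ConnAux.expand V hdV hlV m (Vt m) (hdVt m)
  set Δ : Matrix (Fin N) (Fin N) ℂ :=
    applyUt U Λ c Mu e fun i => h ^ m * Bvec (Vt m) h i with hΔdef
  set E : Matrix (Fin N) (Fin N) ℂ :=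
    evalM (Vt m) 0 * deltaMat c Mu e (P0 N) * Λ.transpose with hEdef
  -- value of `(h^r U)(B̃_m)` for `r ≤ m`
  have happly : ∀ r ≤ m, applyU U (fun i => h ^ r * Bvec (Vt m) h i)
      = (if r = m then Δ else 0) - (if r = 0 then E else 0) := by
    intro r hr
    have hU : applyU U (fun i => h ^ r * Bvec (Vt m) h i)
        = applyUt U Λ c Mu e (fun i => h ^ r * Bvec (Vt m) h i)
          - deltaMat c Mu e (fun i => h ^ r * Bvec (Vt m) h i) * Λ.transpose := by
      simp [applyUt]
    have h1 : applyUt U Λ c Mu e (fun i => h ^ r * Bvec (Vt m) h i)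
        = if r = m then Δ else 0 := by
      rcases eq_or_lt_of_le hr with rfl | hlt
      · rw [if_pos rfl]
      · rw [if_neg (by omega)]
        exact hleftt m r hlt
    have h2 : deltaMat c Mu e (fun i => h ^ r * Bvec (Vt m) h i) * Λ.transpose
        = if r = 0 then E else 0 := by
      rcases Nat.eq_zero_or_pos r with rfl | hrpos
      · rw [if_pos rfl, hEdef]
        have hfun : (fun i => h ^ 0 * Bvec (Vt m) h i) = Bvec (Vt m) h := by
          funext i; rw [pow_zero, one_mul]
        rw [hfun, ConnAux.deltaMat_Bvec c Mu e h hh]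
      · rw [if_neg (by omega)]
        obtain ⟨r', rfl⟩ : ∃ r', r = r' + 1 := ⟨r - 1, by omega⟩
        have hfun : (fun i => h ^ (r' + 1) * Bvec (Vt m) h i)
            = fun i => h * (h ^ r' * Bvec (Vt m) h i) := by
          funext i; ring
        rw [hfun, ConnAux.deltaMat_h_mul c Mu e h hh, zero_mul]
    rw [hU, h1, h2]
  -- the expansion coefficients
  have hAn : ∀ n ≤ m, A n = (if n = m then Δ * leadC (G m) m else 0) - E * evalM (G n) 0 := by
    intro n hn
    have h1 : transApply U (compH (G n) h) (Bvec (Vt m) h) = A n := by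
      conv_lhs => rw [hA]
      rw [ConnAux.transApply_Bvec_expand]
      simp only [hbi, mul_ite, mul_one, mul_zero]
      rw [Finset.sum_ite_eq]
      exact if_pos (Finset.mem_range.mpr (by omega))
    have h2 := ConnAux.transApply_expand U h n (G n) (hdG n) (Bvec (Vt m) h)
    rw [h1] at h2
    rw [h2]
    have hterm : ∀ r ∈ Finset.range (n + 1),
        applyU U (fun i => h ^ r * Bvec (Vt m) h i) * leadC (G n) r
        = (if r = m then Δ * leadC (G n) r else 0)
          - (if r = 0 then E * leadC (G n) r else 0) := by
      intro r hr
      rw [Finset.mem_range] at hr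
      rw [happly r (by omega), sub_mul, ite_mul, zero_mul, ite_mul, zero_mul]
    rw [Finset.sum_congr rfl hterm, Finset.sum_sub_distrib]
    congr 1
    · rw [Finset.sum_ite_eq' (Finset.range (n + 1)) m (fun r => Δ * leadC (G n) r)]
      rcases eq_or_lt_of_le hn with rfl | hlt
      · rw [if_pos (Finset.mem_range.mpr (by omega)), if_pos rfl]
      · rw [if_neg (by rw [Finset.mem_range]; omega), if_neg (by omega)]
    · rw [Finset.sum_ite_eq' (Finset.range (n + 1)) 0 (fun r => E * leadC (G n) r),
        if_pos (Finset.mem_range.mpr (by omega)), ConnAux.leadC_zero_eq_evalM_zero]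
  -- the connection formula
  have hmain : ∀ x : ℂ, evalM (Vt m) (h.eval x)
      = Δ * leadC (G m) m * evalM (V m) (h.eval x)
        - E * ∑ j ∈ Finset.range (m + 1), evalM (G j) 0 * evalM (V j) (h.eval x) := by
    intro x
    conv_lhs => rw [hA]
    rw [ConnAux.evalM_sum]
    simp only [ConnAux.evalM_smulM]
    rw [Finset.sum_congr rfl (fun k hk => by
      rw [hAn k (by rw [Finset.mem_range] at hk; omega), sub_mul, ite_mul, zero_mul])]
    rw [Finset.sum_sub_distrib]
    congr 1
    · rw [Finset.sum_ite_eq' (Finset.range (m + 1)) m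
        (fun k => Δ * leadC (G m) m * evalM (V k) (h.eval x)),
        if_pos (Finset.mem_range.mpr (by omega))]
    · rw [Finset.mul_sum]
      exact Finset.sum_congr rfl fun k _ => by rw [mul_assoc]
  refine ⟨(hlefttn m).mul (hlG m), hmain, ?_⟩
  -- evaluation at a root of h
  have hdpos : 0 < h.degree := by
    rw [← Polynomial.natDegree_pos_iff_degree_pos, hdeg]; omega
  obtain ⟨x0, hx0⟩ := Complex.exists_root hdpos
  have hx0' : h.eval x0 = 0 := hx0
  have h3 := hmain x0
  rw [hx0'] at h3
  have hK : (∑ j ∈ Finset.range (m + 1), evalM (G j) 0 * evalM (V j) 0) = Kzero V G m := rfl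
  rw [hK] at h3
  rw [mul_add, mul_one]
  have hEK : evalM (Vt m) 0 * (deltaMat c Mu e (P0 N) * Λ.transpose * Kzero V G m)
      = E * Kzero V G m := by
    rw [hEdef, ← mul_assoc, ← mul_assoc]
  rw [hEK, h3]
  abel

end
end
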